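/- arXiv:2001.01607 — 3 statements merged into one kernel-verified Lean document; each statement's English description precedes it below -/
import Mathlib

section
/- Let G be a (theta, triangle)-free graph and let W = (H, {u, v}) be a 2-wheel in G with uv ∉ E(G) that is not a nested wheel. Then u and v have no common neighbors in H. -/
open SimpleGraph

variable {V : Type} [Fintype V] [DecidableEq V]

/-- `p` is a chordless (induced) path in `G`: a path such that the only edges of `G`
between its vertices are the edges of the path. -/
def IsInducedPathW (G : SimpleGraph V) {a b : V} (p : G.Walk a b) : Prop :=
  p.IsPath ∧ ∀ u v : V, u ∈ p.support → v ∈ p.support → G.Adj u v → p.toSubgraph.Adj u v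

/-- A hole of length `n` in `G`: an induced (chordless) cycle of length `n ≥ 4`,
given by an injection of `ZMod n` into `G` whose adjacencies are exactly the consecutive ones. -/
def IsHoleEmb (G : SimpleGraph V) (n : ℕ) (f : ZMod n → V) : Prop :=
  4 ≤ n ∧ Function.Injective f ∧
    ∀ i j : ZMod n, G.Adj (f i) (f j) ↔ (j = i + 1 ∨ i = j + 1)

/-- `G` contains an even hole (induced even cycle of length at least 4). -/
def ContainsEvenHole (G : SimpleGraph V) : Prop :=
  ∃ (n : ℕ) (f : ZMod n → V), IsHoleEmb G n f ∧ Even n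

/-- `G` contains a square (hole of length 4). -/
def ContainsSquare (G : SimpleGraph V) : Prop :=
  ∃ f : ZMod 4 → V, IsHoleEmb G 4 f

/-- `G` contains a theta as an induced subgraph: three internally vertex-disjoint chordless
paths from `a` to `b`, each of length at least 2, with no edges between the paths other than
those incident to `a` or `b` specified by the paths. -/
def ContainsTheta (G : SimpleGraph V) : Prop :=
  ∃ (a b : V) (p₁ p₂ p₃ : G.Walk a b),
    (IsInducedPathW G p₁ ∧ IsInducedPathW G p₂ ∧ IsInducedPathW G p₃) ∧
    (2 ≤ p₁.length ∧ 2 ≤ p₂.length ∧ 2 ≤ p₃.length) ∧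
    (∀ w : V, ((w ∈ p₁.support ∧ w ∈ p₂.support) ∨ (w ∈ p₁.support ∧ w ∈ p₃.support) ∨
          (w ∈ p₂.support ∧ w ∈ p₃.support)) → (w = a ∨ w = b)) ∧
    (∀ u w : V, u ≠ a → u ≠ b → w ≠ a → w ≠ b →
      ((u ∈ p₁.support ∧ w ∈ p₂.support) ∨ (u ∈ p₁.support ∧ w ∈ p₃.support) ∨
       (u ∈ p₂.support ∧ w ∈ p₃.support)) → ¬G.Adj u w)

/-- `G` contains a prism as an induced subgraph. -/
def ContainsPrism (G : SimpleGraph V) : Prop :=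
  ∃ (a₁ b₁ a₂ b₂ a₃ b₃ : V) (p₁ : G.Walk a₁ b₁) (p₂ : G.Walk a₂ b₂) (p₃ : G.Walk a₃ b₃),
    (IsInducedPathW G p₁ ∧ IsInducedPathW G p₂ ∧ IsInducedPathW G p₃) ∧
    (1 ≤ p₁.length ∧ 1 ≤ p₂.length ∧ 1 ≤ p₃.length) ∧
    (G.Adj a₁ a₂ ∧ G.Adj a₂ a₃ ∧ G.Adj a₁ a₃) ∧
    (G.Adj b₁ b₂ ∧ G.Adj b₂ b₃ ∧ G.Adj b₁ b₃) ∧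
    (∀ w : V, ¬(w ∈ p₁.support ∧ w ∈ p₂.support) ∧ ¬(w ∈ p₁.support ∧ w ∈ p₃.support) ∧
          ¬(w ∈ p₂.support ∧ w ∈ p₃.support)) ∧
    (∀ u w : V, u ∈ p₁.support → w ∈ p₂.support → G.Adj u w →
      (u = a₁ ∧ w = a₂) ∨ (u = b₁ ∧ w = b₂)) ∧
    (∀ u w : V, u ∈ p₁.support → w ∈ p₃.support → G.Adj u w →
      (u = a₁ ∧ w = a₃) ∨ (u = b₁ ∧ w = b₃)) ∧
    (∀ u w : V, u ∈ p₂.support → w ∈ p₃.support → G.Adj u w →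
      (u = a₂ ∧ w = a₃) ∨ (u = b₂ ∧ w = b₃))

/-- `G` contains a pyramid as an induced subgraph. -/
def ContainsPyramid (G : SimpleGraph V) : Prop :=
  ∃ (a b₁ b₂ b₃ : V) (p₁ : G.Walk a b₁) (p₂ : G.Walk a b₂) (p₃ : G.Walk a b₃),
    (IsInducedPathW G p₁ ∧ IsInducedPathW G p₂ ∧ IsInducedPathW G p₃) ∧
    (1 ≤ p₁.length ∧ 1 ≤ p₂.length ∧ 1 ≤ p₃.length) ∧
    ((2 ≤ p₁.length ∧ 2 ≤ p₂.length) ∨ (2 ≤ p₁.length ∧ 2 ≤ p₃.length) ∨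
     (2 ≤ p₂.length ∧ 2 ≤ p₃.length)) ∧
    (G.Adj b₁ b₂ ∧ G.Adj b₂ b₃ ∧ G.Adj b₁ b₃) ∧
    (∀ w : V, ((w ∈ p₁.support ∧ w ∈ p₂.support) ∨ (w ∈ p₁.support ∧ w ∈ p₃.support) ∨
          (w ∈ p₂.support ∧ w ∈ p₃.support)) → w = a) ∧
    (∀ u w : V, u ∈ p₁.support → w ∈ p₂.support → u ≠ a → w ≠ a → G.Adj u w →
      u = b₁ ∧ w = b₂) ∧
    (∀ u w : V, u ∈ p₁.support → w ∈ p₃.support → u ≠ a → w ≠ a → G.Adj u w →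
      u = b₁ ∧ w = b₃) ∧
    (∀ u w : V, u ∈ p₂.support → w ∈ p₃.support → u ≠ a → w ≠ a → G.Adj u w →
      u = b₂ ∧ w = b₃)

/-- `G` contains the cube as an induced subgraph: a hole of length 6 together with
two non-adjacent vertices `u, v` outside it, `u` adjacent to the even positions and
`v` adjacent to the odd positions. -/
def ContainsCube (G : SimpleGraph V) : Prop :=
  ∃ (f : ZMod 6 → V) (u v : V), IsHoleEmb G 6 f ∧
    u ∉ Set.range f ∧ v ∉ Set.range f ∧ ¬G.Adj u v ∧
    (∀ m : ZMod 6, G.Adj u (f m) ↔ (m = 0 ∨ m = 2 ∨ m = 4)) ∧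
    (∀ m : ZMod 6, G.Adj v (f m) ↔ (m = 1 ∨ m = 3 ∨ m = 5))

/-- `G` contains an even wheel: a hole plus a vertex outside it having at least 3 and
an even number of neighbors on the hole. -/
def ContainsEvenWheel (G : SimpleGraph V) : Prop :=
  ∃ (n : ℕ) (f : ZMod n → V) (u : V), IsHoleEmb G n f ∧ u ∉ Set.range f ∧
    3 ≤ {m : ZMod n | G.Adj u (f m)}.ncard ∧ Even {m : ZMod n | G.Adj u (f m)}.ncard

/-- `G` contains a butterfly: a wheel `(H,v)` with `N_H(v) = {a,b,c,d}`,
`ab, cd ∈ E(G)` and `bc, da ∉ E(G)`. -/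
def ContainsButterfly (G : SimpleGraph V) : Prop :=
  ∃ (n : ℕ) (f : ZMod n → V) (u : V), IsHoleEmb G n f ∧ u ∉ Set.range f ∧
    ∃ i j : ZMod n, i ≠ j ∧ i ≠ j + 1 ∧ i + 1 ≠ j ∧ i + 1 ≠ j + 1 ∧
      ¬G.Adj (f (i + 1)) (f j) ∧ ¬G.Adj (f (j + 1)) (f i) ∧
      (∀ m : ZMod n, G.Adj u (f m) ↔ (m = i ∨ m = i + 1 ∨ m = j ∨ m = j + 1))

/-- A 2-wheel in `G`: a hole `f` together with two distinct centers `u, v` outside the hole,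
each having at least three neighbors on the hole. -/
def Is2WheelCfg (G : SimpleGraph V) (n : ℕ) (f : ZMod n → V) (u v : V) : Prop :=
  IsHoleEmb G n f ∧ u ≠ v ∧ u ∉ Set.range f ∧ v ∉ Set.range f ∧
  3 ≤ {m : ZMod n | G.Adj u (f m)}.ncard ∧ 3 ≤ {m : ZMod n | G.Adj v (f m)}.ncard

/-- The 2-wheel `(f, {u,v})` is nested: the hole splits at `f i` and `f (i+d)` into two arcs,
with all neighbors of `u` on one arc and all neighbors of `v` on the other. -/
def NestedCfg (G : SimpleGraph V) (n : ℕ) (f : ZMod n → V) (u v : V) : Prop :=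
  ∃ (i : ZMod n) (d : ℕ), 1 ≤ d ∧ d < n ∧
    (∀ m : ZMod n, G.Adj u (f m) → ∃ e : ℕ, e ≤ d ∧ m = i + (e : ZMod n)) ∧
    (∀ m : ZMod n, G.Adj v (f m) → ∃ e : ℕ, e ≤ n - d ∧ m = i + (d : ZMod n) + (e : ZMod n))

/-- The 2-wheel `(f, {u,v})` is the cube. -/
def CubeCfg (G : SimpleGraph V) (n : ℕ) (f : ZMod n → V) (u v : V) : Prop :=
  n = 6 ∧ ∃ i : ZMod n,
    (∀ m : ZMod n, G.Adj u (f m) ↔ (m = i ∨ m = i + 2 ∨ m = i + 4)) ∧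
    (∀ m : ZMod n, G.Adj v (f m) ↔ (m = i + 1 ∨ m = i + 3 ∨ m = i + 5))

/-- The 2-wheel `(f, {u,v})` is a cousin wheel: `N_H(u) = {h₁,h₂,h₃}` and
`N_H(v) = {h₂,h₃,h₄}` for four consecutive vertices of the hole (or with `u, v` swapped). -/
def CousinCfg (G : SimpleGraph V) (n : ℕ) (f : ZMod n → V) (u v : V) : Prop :=
  (∃ i : ZMod n,
    (∀ m : ZMod n, G.Adj u (f m) ↔ (m = i ∨ m = i + 1 ∨ m = i + 2)) ∧
    (∀ m : ZMod n, G.Adj v (f m) ↔ (m = i + 1 ∨ m = i + 2 ∨ m = i + 3))) ∨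
  (∃ i : ZMod n,
    (∀ m : ZMod n, G.Adj v (f m) ↔ (m = i ∨ m = i + 1 ∨ m = i + 2)) ∧
    (∀ m : ZMod n, G.Adj u (f m) ↔ (m = i + 1 ∨ m = i + 2 ∨ m = i + 3)))

/-- A `u`-sector of the hole `f`: a subpath from `f i` to `f (i+d)` (`1 ≤ d < n`)
whose two ends are adjacent to `u` and whose internal vertices are not. -/
def IsSector (G : SimpleGraph V) (n : ℕ) (f : ZMod n → V) (u : V) (i : ZMod n) (d : ℕ) : Prop :=
  1 ≤ d ∧ d < n ∧ G.Adj u (f i) ∧ G.Adj u (f (i + (d : ZMod n))) ∧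
    ∀ m : ℕ, 0 < m → m < d → ¬G.Adj u (f (i + (m : ZMod n)))

/-- The class 𝒞: (theta, prism, pyramid, butterfly)-free graphs in which every 2-wheel
with non-adjacent centers is a nested wheel or a cousin wheel. -/
def InClassC (G : SimpleGraph V) : Prop :=
  ¬ContainsTheta G ∧ ¬ContainsPrism G ∧ ¬ContainsPyramid G ∧ ¬ContainsButterfly G ∧
  ∀ (n : ℕ) (f : ZMod n → V) (u v : V), Is2WheelCfg G n f u v → ¬G.Adj u v →
    (NestedCfg G n f u v ∨ CousinCfg G n f u v)

/-- `G` contains `S_{k,k,k}` as an induced subgraph: a root `r` and three legs of `k` edges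
each, with no other adjacencies among these vertices. -/
def ContainsSpider (G : SimpleGraph V) (k : ℕ) : Prop :=
  ∃ (r : V) (f : Fin 3 → Fin k → V),
    (∀ (j : Fin 3) (m : Fin k), f j m ≠ r) ∧
    (∀ (j₁ : Fin 3) (m₁ : Fin k) (j₂ : Fin 3) (m₂ : Fin k),
      f j₁ m₁ = f j₂ m₂ → j₁ = j₂ ∧ m₁ = m₂) ∧
    (∀ (j : Fin 3) (m : Fin k), G.Adj r (f j m) ↔ (m : ℕ) = 0) ∧
    (∀ (j₁ : Fin 3) (m₁ : Fin k) (j₂ : Fin 3) (m₂ : Fin k),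
      G.Adj (f j₁ m₁) (f j₂ m₂) ↔
        (j₁ = j₂ ∧ ((m₁ : ℕ) + 1 = (m₂ : ℕ) ∨ (m₂ : ℕ) + 1 = (m₁ : ℕ))))

/-- A `k`-span-wheel in `G`: a hole `f` of length `n`, with `x = f 0` and `y = f p`
non-adjacent, the two paths `P_A = f 0, f 1, …, f p` and `P_B = f 0, f (n-1), …, f p`,
and centers `c 0, …, c (k-1)` outside the hole such that `{c i} ∪ {x,y}` is independent,
every center has at least three neighbors on the hole and neighbors in the interiors of
both `P_A` and `P_B`, and the neighbors of the centers appear along both `P_A` and `P_B`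
(from `x` to `y`) in the order of the centers. -/
def IsSpanWheel (G : SimpleGraph V) (k n p : ℕ) (f : ZMod n → V) (c : Fin k → V) : Prop :=
  IsHoleEmb G n f ∧
  2 ≤ p ∧ p ≤ n - 2 ∧
  ¬G.Adj (f 0) (f (p : ZMod n)) ∧
  Function.Injective c ∧
  (∀ i : Fin k, c i ∉ Set.range f) ∧
  (∀ i j : Fin k, i ≠ j → ¬G.Adj (c i) (c j)) ∧
  (∀ i : Fin k, ¬G.Adj (c i) (f 0)) ∧
  (∀ i : Fin k, ¬G.Adj (c i) (f (p : ZMod n))) ∧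
  (∀ i : Fin k, 3 ≤ {m : ZMod n | G.Adj (c i) (f m)}.ncard) ∧
  (∀ i : Fin k, ∃ a : ℕ, 0 < a ∧ a < p ∧ G.Adj (c i) (f (a : ZMod n))) ∧
  (∀ i : Fin k, ∃ b : ℕ, p < b ∧ b < n ∧ G.Adj (c i) (f (b : ZMod n))) ∧
  (∀ i j : Fin k, i < j → ∀ a₁ a₂ : ℕ, a₁ ≤ p → a₂ ≤ p →
    G.Adj (c i) (f (a₁ : ZMod n)) → G.Adj (c j) (f (a₂ : ZMod n)) → a₁ ≤ a₂) ∧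
  (∀ i j : Fin k, i < j → ∀ b₁ b₂ : ℕ, p ≤ b₁ → b₁ ≤ n → p ≤ b₂ → b₂ ≤ n →
    G.Adj (c i) (f (b₁ : ZMod n)) → G.Adj (c j) (f (b₂ : ZMod n)) → b₂ ≤ b₁)

/-- `X` separates `s` from `t` in `G`: neither is in `X` and every walk from `s` to `t`
meets `X`. -/
def Separates (G : SimpleGraph V) (X : Set V) (s t : V) : Prop :=
  s ∉ X ∧ t ∉ X ∧ ∀ p : G.Walk s t, ∃ w ∈ p.support, w ∈ X

/-- `X` is a minimal separator of `G`: for some pair `s, t` it is an inclusion-wise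
minimal `st`-separator. -/
def MinSeparator (G : SimpleGraph V) (X : Set V) : Prop :=
  ∃ s t : V, Separates G X s t ∧ ∀ Y ⊆ X, Separates G Y s t → Y = X

/-- `A` is a connected component of `G ∖ C` that is full to `C`. -/
def IsFullComponent (G : SimpleGraph V) (C A : Set V) : Prop :=
  A.Nonempty ∧ Disjoint A C ∧ (G.induce A).Connected ∧
  (∀ a ∈ A, ∀ w : V, G.Adj a w → w ∈ A ∪ C) ∧
  (∀ x ∈ C, ∃ a ∈ A, G.Adj x a)

/-- A tree decomposition of `G` with tree `T` and bags `B`. -/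
def IsTreeDecomp (G : SimpleGraph V) {ι : Type} (T : SimpleGraph ι) (B : ι → Finset V) : Prop :=
  T.IsTree ∧
  (∀ v : V, ∃ i, v ∈ B i) ∧
  (∀ u v : V, G.Adj u v → ∃ i, u ∈ B i ∧ v ∈ B i) ∧
  (∀ (v : V) (i j : ι), v ∈ B i → v ∈ B j →
    ∀ (p : T.Walk i j), p.IsPath → ∀ x ∈ p.support, v ∈ B x)

/-- The treewidth of a finite graph: the least `w` such that `G` has a tree decomposition
all of whose bags have size at most `w + 1`. -/
noncomputable def treewidth (G : SimpleGraph V) : ℕ :=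
  sInf {w : ℕ | ∃ (m : ℕ) (T : SimpleGraph (Fin m)) (B : Fin m → Finset V),
    IsTreeDecomp G T B ∧ ∀ i, (B i).card ≤ w + 1}

/-- A graph is chordal iff it has no hole. -/
def IsChordal (G : SimpleGraph V) : Prop :=
  ¬∃ (n : ℕ) (f : ZMod n → V), IsHoleEmb G n f

/-- `H` is obtained from `G` by a minimal fill-in (minimal chordal completion). -/
def IsMinimalChordalCompletion (G H : SimpleGraph V) : Prop :=
  G ≤ H ∧ IsChordal H ∧ ∀ H' : SimpleGraph V, G ≤ H' → H' ≤ H → IsChordal H' → H' = H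

/-- `Ω` is a potential maximal clique of `G`: a maximal clique of some minimal chordal
completion of `G`. -/
def IsPMC (G : SimpleGraph V) (Ω : Set V) : Prop :=
  ∃ H : SimpleGraph V, IsMinimalChordalCompletion G H ∧ H.IsClique Ω ∧
    ∀ Ω' : Set V, H.IsClique Ω' → Ω ⊆ Ω' → Ω' = Ω

/-- `n` satisfies the Ramsey property for `(t, k)`: every graph on `n` vertices has a
clique of size `t` or an independent set of size `k`. -/
def RamseyProp (n t k : ℕ) : Prop :=
  ∀ G : SimpleGraph (Fin n),
    (∃ S : Finset (Fin n), G.IsNClique t S) ∨ (∃ S : Finset (Fin n), Gᶜ.IsNClique k S)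

/-- The Ramsey number `R(t, k)`. -/
noncomputable def ramseyNumber (t k : ℕ) : ℕ := sInf {n : ℕ | RamseyProp n t k}

/-!
Let `x = f m` be a common neighbour of `u` and `v` on the rim. Read from `x`, the rim is an induced
path `x = h 0, h 1, …, h (n - 2)`, and by triangle-freeness any two neighbours of `u` (or of `v`) on
it are at distance at least 2. Call a stretch of this path a *link* if it runs from a neighbour of
`u` to a neighbour of `v` and its other vertices see neither; together with `u` and `v` it is an
induced `u`–`v` path, and `x` alone is a link. Three links pairwise at distance at least 2 form a
theta with ends `u` and `v`.

If `u` and `v` have a second common neighbour `c` on the rim, the wheel condition gives each of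
them a neighbour other than `x` and `c`, and since the wheel is not nested two such neighbours can
be chosen on the same side of `c`; between them lies a third link. Otherwise let `h b` be the first
neighbour of `v`, say preceded by a neighbour of `u`. Since the wheel is not nested, `u` also has
a neighbour after `h b`; let `h a'` be the first and `h a` the last one before `h b`. If `v` sees a
vertex strictly between `h b` and `h a'`, there are again three links. If not, the paths
`u, h a, …, h b`, `u, h a', …, h b` and `u, x, v, h b` form a theta with ends `u` and `h b`.
-/

section

omit [Fintype V] [DecidableEq V]

variable {G : SimpleGraph V}

lemma Set.exists_mem_ne_ne_of_two_lt_ncard {α : Type*} {s : Set α} (hs : 2 < s.ncard) (x y : α) :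
    ∃ a ∈ s, a ≠ x ∧ a ≠ y := by
  have hpair : ({x, y} : Set α).ncard < s.ncard :=
    ((Set.ncard_insert_le x {y}).trans (by rw [Set.ncard_singleton])).trans_lt hs
  obtain ⟨a, has, ha⟩ := Set.exists_mem_notMem_of_ncard_lt_ncard hpair
  simp only [Set.mem_insert_iff, Set.mem_singleton_iff, not_or] at ha
  exact ⟨a, has, ha⟩

lemma SimpleGraph.CliqueFree.not_adj_of_adj_of_adj (hG : G.CliqueFree 3) {a b c : V}
    (hab : G.Adj a b) (hac : G.Adj a c) : ¬G.Adj b c := fun hbc =>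
  isIndepSet_neighborSet_of_triangleFree G hG a hab hac hbc.ne hbc

lemma SimpleGraph.Walk.two_le_length_of_not_adj {s t : V} (p : G.Walk s t) (hst : s ≠ t)
    (hnadj : ¬G.Adj s t) : 2 ≤ p.length := by
  by_contra! hp
  interval_cases h : p.length
  · exact hst (Walk.eq_of_length_eq_zero h)
  · exact hnadj (Walk.adj_of_length_eq_one h)

lemma isInducedPathW_nil (a : V) : IsInducedPathW G (Walk.nil : G.Walk a a) :=
  ⟨Walk.IsPath.nil, fun x y hx hy hxy => by
    simp only [Walk.support_nil, List.mem_singleton] at hx hy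
    exact absurd (hx ▸ hy ▸ hxy) (G.irrefl)⟩

lemma IsInducedPathW.reverse {a b : V} {p : G.Walk a b} (hp : IsInducedPathW G p) :
    IsInducedPathW G p.reverse := by
  refine ⟨hp.1.reverse, fun x y hx hy hxy => ?_⟩
  rw [Walk.support_reverse, List.mem_reverse] at hx hy
  rw [Walk.toSubgraph_reverse]
  exact hp.2 x y hx hy hxy

lemma IsInducedPathW.cons {c a b : V} {p : G.Walk a b} (hp : IsInducedPathW G p)
    (hca : G.Adj c a) (hc : c ∉ p.support) (hfar : ∀ w ∈ p.support, w ≠ a → ¬G.Adj c w) :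
    IsInducedPathW G (Walk.cons hca p) := by
  have hedge : (Walk.cons hca p).toSubgraph.Adj c a := by simp
  have hold : ∀ x y, p.toSubgraph.Adj x y → (Walk.cons hca p).toSubgraph.Adj x y :=
    fun x y h => by simp [h]
  refine ⟨hp.1.cons hc, fun x y hx hy hxy => ?_⟩
  rw [Walk.support_cons, List.mem_cons] at hx hy
  rcases hx with rfl | hx <;> rcases hy with rfl | hy
  · exact absurd hxy (G.irrefl)
  · by_cases hya : y = a
    · exact hya ▸ hedge
    · exact absurd hxy (hfar y hy hya)
  · by_cases hxa : x = a
    · exact hxa ▸ hedge.symm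
    · exact absurd hxy.symm (hfar x hx hxa)
  · exact hold x y (hp.2 x y hx hy hxy)

def Anticomplete (G : SimpleGraph V) (X Y : Set V) : Prop :=
  ∀ x ∈ X, ∀ y ∈ Y, x ≠ y ∧ ¬G.Adj x y

lemma containsTheta_of_anticomplete {s t : V} (hst : s ≠ t) (hnadj : ¬G.Adj s t)
    {p₁ p₂ p₃ : G.Walk s t} (h₁ : IsInducedPathW G p₁) (h₂ : IsInducedPathW G p₂)
    (h₃ : IsInducedPathW G p₃) {I₁ I₂ I₃ : Set V}
    (hI₁ : ∀ w ∈ p₁.support, w = s ∨ w = t ∨ w ∈ I₁)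
    (hI₂ : ∀ w ∈ p₂.support, w = s ∨ w = t ∨ w ∈ I₂)
    (hI₃ : ∀ w ∈ p₃.support, w = s ∨ w = t ∨ w ∈ I₃)
    (h₁₂ : Anticomplete G I₁ I₂) (h₁₃ : Anticomplete G I₁ I₃) (h₂₃ : Anticomplete G I₂ I₃) :
    ContainsTheta G := by
  have inner : ∀ {p : G.Walk s t} {I : Set V}, (∀ w ∈ p.support, w = s ∨ w = t ∨ w ∈ I) →
      ∀ w ∈ p.support, w ≠ s → w ≠ t → w ∈ I := fun hI w hw hs ht => by
    rcases hI w hw with h | h | h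
    exacts [absurd h hs, absurd h ht, h]
  refine ⟨s, t, p₁, p₂, p₃, ⟨h₁, h₂, h₃⟩,
    ⟨p₁.two_le_length_of_not_adj hst hnadj, p₂.two_le_length_of_not_adj hst hnadj,
      p₃.two_le_length_of_not_adj hst hnadj⟩, fun w hw => ?_, fun x y hxs hxt hys hyt hxy => ?_⟩
  · by_contra! hw'
    rcases hw with ⟨ha, hb⟩ | ⟨ha, hb⟩ | ⟨ha, hb⟩
    · exact (h₁₂ w (inner hI₁ w ha hw'.1 hw'.2) w (inner hI₂ w hb hw'.1 hw'.2)).1 rfl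
    · exact (h₁₃ w (inner hI₁ w ha hw'.1 hw'.2) w (inner hI₃ w hb hw'.1 hw'.2)).1 rfl
    · exact (h₂₃ w (inner hI₂ w ha hw'.1 hw'.2) w (inner hI₃ w hb hw'.1 hw'.2)).1 rfl
  · rcases hxy with ⟨ha, hb⟩ | ⟨ha, hb⟩ | ⟨ha, hb⟩
    · exact (h₁₂ x (inner hI₁ x ha hxs hxt) y (inner hI₂ y hb hys hyt)).2
    · exact (h₁₃ x (inner hI₁ x ha hxs hxt) y (inner hI₃ y hb hys hyt)).2
    · exact (h₂₃ x (inner hI₂ x ha hxs hxt) y (inner hI₃ y hb hys hyt)).2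

variable {L : ℕ} {h : ℕ → V} {u v : V}

structure IsInducedPathEmb (G : SimpleGraph V) (L : ℕ) (h : ℕ → V) : Prop where
  injOn : Set.InjOn h (Set.Iic L)
  adj_iff : ∀ i ≤ L, ∀ j ≤ L, G.Adj (h i) (h j) ↔ i + 1 = j ∨ j + 1 = i

namespace IsInducedPathEmb

lemma anticomplete_image (hh : IsInducedPathEmb G L h) {S T : Set ℕ} (hS : ∀ k ∈ S, k ≤ L)
    (hT : ∀ k ∈ T, k ≤ L) (hST : ∀ k ∈ S, ∀ k' ∈ T, k + 2 ≤ k' ∨ k' + 2 ≤ k) :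
    Anticomplete G (h '' S) (h '' T) := by
  rintro _ ⟨k, hk, rfl⟩ _ ⟨k', hk', rfl⟩
  have hfar := hST k hk k' hk'
  refine ⟨fun heq => ?_, fun hadj => ?_⟩
  · have : k = k' := hh.injOn (hS k hk) (hT k' hk') heq
    omega
  · have := (hh.adj_iff k (hS k hk) k' (hT k' hk')).1 hadj
    omega

lemma add_two_le (hh : IsInducedPathEmb G L h) (hTri : G.CliqueFree 3) {w : V} {i j : ℕ}
    (hi : G.Adj w (h i)) (hj : G.Adj w (h j)) (hij : i < j) (hjL : j ≤ L) : i + 2 ≤ j := by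
  by_contra!
  obtain rfl : j = i + 1 := by omega
  exact hTri.not_adj_of_adj_of_adj hi hj ((hh.adj_iff i (by omega) (i + 1) hjL).2 (Or.inl rfl))

lemma exists_arc_of_add_eq (hh : IsInducedPathEmb G L h) (d : ℕ) :
    ∀ i j, i + d = j → j ≤ L → ∃ p : G.Walk (h i) (h j), IsInducedPathW G p ∧
      ∀ w ∈ p.support, ∃ k, i ≤ k ∧ k ≤ j ∧ w = h k := by
  induction d with
  | zero =>
    rintro i _ rfl -
    exact ⟨Walk.nil, isInducedPathW_nil _, fun w hw => ⟨i, le_rfl, le_rfl, by simpa using hw⟩⟩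
  | succ d ih =>
    intro i j hij hj
    obtain ⟨p, hp, hsupp⟩ := ih (i + 1) j (by omega) hj
    have hadj : G.Adj (h i) (h (i + 1)) := (hh.adj_iff i (by omega) (i + 1) (by omega)).2 (by simp)
    refine ⟨Walk.cons hadj p, hp.cons hadj (fun hmem => ?_) (fun w hw hne hadj' => ?_),
      fun w hw => ?_⟩
    · obtain ⟨k, hk, hkj, hik⟩ := hsupp _ hmem
      have : i = k := hh.injOn (show i ≤ L by omega) (show k ≤ L by omega) hik
      omega
    · obtain ⟨k, hk, hkj, rfl⟩ := hsupp w hw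
      have := (hh.adj_iff i (by omega) k (by omega)).1 hadj'
      obtain rfl : k = i + 1 := by omega
      exact hne rfl
    · rw [Walk.support_cons, List.mem_cons] at hw
      rcases hw with rfl | hw
      · exact ⟨i, le_rfl, by omega, rfl⟩
      · obtain ⟨k, hk, hkj, rfl⟩ := hsupp w hw
        exact ⟨k, by omega, hkj, rfl⟩

lemma exists_arc (hh : IsInducedPathEmb G L h) {i j : ℕ} (hi : i ≤ L) (hj : j ≤ L) :
    ∃ p : G.Walk (h i) (h j), IsInducedPathW G p ∧
      ∀ w ∈ p.support, ∃ k ∈ Set.uIcc i j, w = h k := by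
  rcases le_total i j with hij | hji
  · obtain ⟨p, hp, hsupp⟩ := hh.exists_arc_of_add_eq (j - i) i j (by omega) hj
    refine ⟨p, hp, fun w hw => ?_⟩
    obtain ⟨k, hik, hkj, rfl⟩ := hsupp w hw
    exact ⟨k, Set.mem_uIcc.2 (Or.inl ⟨hik, hkj⟩), rfl⟩
  · obtain ⟨p, hp, hsupp⟩ := hh.exists_arc_of_add_eq (i - j) j i (by omega) hi
    refine ⟨p.reverse, hp.reverse, fun w hw => ?_⟩
    obtain ⟨k, hjk, hki, rfl⟩ := hsupp w (by simpa using hw)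
    exact ⟨k, Set.mem_uIcc.2 (Or.inr ⟨hjk, hki⟩), rfl⟩

lemma exists_path_from (hh : IsInducedPathEmb G L h) {x : V} {i j : ℕ} (hi : i ≤ L) (hj : j ≤ L)
    (hx : ∀ k ≤ L, h k ≠ x) (hxi : G.Adj x (h i))
    (hxk : ∀ k ∈ Set.uIcc i j, k ≠ i → ¬G.Adj x (h k)) :
    ∃ p : G.Walk x (h j), IsInducedPathW G p ∧
      ∀ w ∈ p.support, w = x ∨ w = h j ∨ w ∈ h '' (Set.uIcc i j \ {j}) := by
  obtain ⟨p, hp, hsupp⟩ := hh.exists_arc hi hj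
  have hkL : ∀ k ∈ Set.uIcc i j, k ≤ L := fun k hk => by
    have := Set.mem_uIcc.1 hk
    omega
  refine ⟨Walk.cons hxi p, hp.cons hxi (fun hmem => ?_) (fun w hw hwi => ?_), fun w hw => ?_⟩
  · obtain ⟨k, hk, hxk⟩ := hsupp x hmem
    exact hx k (hkL k hk) hxk.symm
  · obtain ⟨k, hk, rfl⟩ := hsupp w hw
    exact hxk k hk (fun hki => hwi (hki ▸ rfl))
  · rw [Walk.support_cons, List.mem_cons] at hw
    rcases hw with rfl | hw
    · exact Or.inl rfl
    · obtain ⟨k, hk, rfl⟩ := hsupp w hw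
      rcases eq_or_ne k j with rfl | hkj
      exacts [Or.inr (Or.inl rfl), Or.inr (Or.inr ⟨k, ⟨hk, hkj⟩, rfl⟩)]

lemma exists_path_via_zero (hh : IsInducedPathEmb G L h) (hu : ∀ k ≤ L, h k ≠ u)
    (hv : ∀ k ≤ L, h k ≠ v) (hne : u ≠ v) (huv : ¬G.Adj u v) (hu0 : G.Adj u (h 0))
    (hv0 : G.Adj v (h 0)) {b : ℕ} (hb : 2 ≤ b) (hbL : b ≤ L) (hvb : G.Adj v (h b))
    (hub : ¬G.Adj u (h b)) :
    ∃ p : G.Walk u (h b), IsInducedPathW G p ∧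
      ∀ w ∈ p.support, w = u ∨ w = h b ∨ w ∈ ({h 0, v} : Set V) := by
  have h0b : ¬G.Adj (h 0) (h b) := fun h' => by
    have := (hh.adj_iff 0 (by omega) b hbL).1 h'
    omega
  have hb0 : h b ≠ h 0 := fun h' => by
    have := hh.injOn (show b ∈ Set.Iic L from hbL) (show 0 ∈ Set.Iic L from Nat.zero_le L) h'
    omega
  refine ⟨Walk.cons hu0 (Walk.cons hv0.symm (Walk.cons hvb Walk.nil)),
    (((isInducedPathW_nil (h b)).cons hvb ?_ ?_).cons hv0.symm ?_ ?_).cons hu0 ?_ ?_, ?_⟩ <;>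
    simp only [Walk.support_cons, Walk.support_nil, List.mem_cons, List.not_mem_nil, or_false]
  · exact (hv b hbL).symm
  · rintro w rfl hw
    exact absurd rfl hw
  · rintro (h' | h')
    exacts [hv 0 (Nat.zero_le L) h', hb0 h'.symm]
  · rintro w (rfl | rfl) hw
    exacts [absurd rfl hw, h0b]
  · rintro (h' | h' | h')
    exacts [hu 0 (Nat.zero_le L) h'.symm, hne h', hu b hbL h'.symm]
  · rintro w (rfl | rfl | rfl) hw
    exacts [absurd rfl hw, huv, hub]
  · rintro w (rfl | rfl | rfl | rfl) <;> simp

end IsInducedPathEmb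

/-- Together with `u` and `v`, the stretch of `h` between `i` and `j` forms an induced
`u`–`v` path. -/
structure IsLink (G : SimpleGraph V) (L : ℕ) (h : ℕ → V) (u v : V) (i j : ℕ) : Prop where
  left_le : i ≤ L
  right_le : j ≤ L
  adj_left : G.Adj u (h i)
  adj_right : G.Adj v (h j)
  gap : ∀ k ∈ Set.uIcc i j, (k ≠ i → ¬G.Adj u (h k)) ∧ (k ≠ j → ¬G.Adj v (h k))

namespace IsLink

variable {i j : ℕ}

lemma symm (hl : IsLink G L h u v i j) : IsLink G L h v u j i :=
  ⟨hl.right_le, hl.left_le, hl.adj_right, hl.adj_left, fun k hk =>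
    (hl.gap k (Set.uIcc_comm j i ▸ hk)).symm⟩

lemma le_of_mem (hl : IsLink G L h u v i j) {k : ℕ} (hk : k ∈ Set.uIcc i j) : k ≤ L := by
  have := Set.mem_uIcc.1 hk
  have := hl.left_le
  have := hl.right_le
  omega

lemma exists_path (hl : IsLink G L h u v i j) (hh : IsInducedPathEmb G L h)
    (hu : ∀ k ≤ L, h k ≠ u) (hv : ∀ k ≤ L, h k ≠ v) (hne : u ≠ v) (huv : ¬G.Adj u v) :
    ∃ p : G.Walk u v, IsInducedPathW G p ∧
      ∀ w ∈ p.support, w = u ∨ w = v ∨ w ∈ h '' Set.uIcc i j := by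
  obtain ⟨q, hq, hqs⟩ := hh.exists_path_from hl.right_le hl.left_le hv hl.adj_right
    (fun k hk hkj => (hl.gap k (Set.uIcc_comm j i ▸ hk)).2 hkj)
  have hqs' : ∀ w ∈ q.reverse.support, w = v ∨ w ∈ h '' Set.uIcc i j := fun w hw => by
    rcases hqs w (by simpa using hw) with h' | rfl | ⟨k, hk, rfl⟩
    · exact Or.inl h'
    · exact Or.inr ⟨i, Set.left_mem_uIcc, rfl⟩
    · exact Or.inr ⟨k, Set.uIcc_comm j i ▸ hk.1, rfl⟩
  refine ⟨Walk.cons hl.adj_left q.reverse,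
    hq.reverse.cons hl.adj_left (fun hmem => ?_) (fun w hw hwi => ?_), fun w hw => ?_⟩
  · rcases hqs' u hmem with h' | ⟨k, hk, hku⟩
    exacts [hne h', hu k (hl.le_of_mem hk) hku]
  · rcases hqs' w hw with rfl | ⟨k, hk, rfl⟩
    exacts [huv, (hl.gap k hk).1 (fun hki => hwi (hki ▸ rfl))]
  · rw [Walk.support_cons, List.mem_cons] at hw
    rcases hw with rfl | hw
    exacts [Or.inl rfl, Or.inr (hqs' w hw)]

end IsLink

lemma isLink_self {k : ℕ} (hk : k ≤ L) (hu : G.Adj u (h k)) (hv : G.Adj v (h k)) :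
    IsLink G L h u v k k :=
  ⟨hk, hk, hu, hv, fun k' hk' => by
    rw [Set.uIcc_self, Set.mem_singleton_iff] at hk'
    exact ⟨fun h' => absurd hk' h', fun h' => absurd hk' h'⟩⟩

lemma exists_isLink {a b : ℕ} (ha : a ≤ L) (hb : b ≤ L) (hua : G.Adj u (h a))
    (hvb : G.Adj v (h b)) : ∃ i j, IsLink G L h u v i j ∧ Set.uIcc i j ⊆ Set.uIcc a b := by
  classical
  wlog hab : a ≤ b generalizing u v a b
  · obtain ⟨i, j, hl, hsub⟩ := this hb ha hvb hua (by omega)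
    exact ⟨j, i, hl.symm, by rwa [Set.uIcc_comm j i, Set.uIcc_comm a b]⟩
  have hex : ∃ j, a ≤ j ∧ G.Adj v (h j) := ⟨b, hab, hvb⟩
  set j := Nat.find hex
  have haj : a ≤ j := (Nat.find_spec hex).1
  have hjb : j ≤ b := Nat.find_min' hex ⟨hab, hvb⟩
  set i := Nat.findGreatest (fun k => G.Adj u (h k)) j
  have hai : a ≤ i := Nat.le_findGreatest haj hua
  have hij : i ≤ j := Nat.findGreatest_le j
  have hmem : ∀ k ∈ Set.uIcc i j, i ≤ k ∧ k ≤ j := fun k hk => by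
    rwa [Set.uIcc_of_le hij, Set.mem_Icc] at hk
  refine ⟨i, j, ⟨by omega, by omega, Nat.findGreatest_spec (P := fun k => G.Adj u (h k)) haj hua,
    (Nat.find_spec hex).2, fun k hk => ⟨fun hki => ?_, fun hkj hvk => ?_⟩⟩,
    Set.uIcc_subset_uIcc ?_ ?_⟩
  · exact Nat.findGreatest_is_greatest (P := fun k => G.Adj u (h k))
      (by have := hmem k hk; omega) (hmem k hk).2
  · exact Nat.find_min hex (by have := hmem k hk; omega) ⟨by have := hmem k hk; omega, hvk⟩
  all_goals rw [Set.uIcc_of_le hab]; constructor <;> omega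

theorem containsTheta_of_three_links (hh : IsInducedPathEmb G L h) (hu : ∀ k ≤ L, h k ≠ u)
    (hv : ∀ k ≤ L, h k ≠ v) (hne : u ≠ v) (huv : ¬G.Adj u v) {i₁ j₁ i₂ j₂ i₃ j₃ : ℕ}
    (h₁ : IsLink G L h u v i₁ j₁) (h₂ : IsLink G L h u v i₂ j₂) (h₃ : IsLink G L h u v i₃ j₃)
    (h₁₂ : ∀ k ∈ Set.uIcc i₁ j₁, ∀ k' ∈ Set.uIcc i₂ j₂, k + 2 ≤ k')
    (h₂₃ : ∀ k ∈ Set.uIcc i₂ j₂, ∀ k' ∈ Set.uIcc i₃ j₃, k + 2 ≤ k') : ContainsTheta G := by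
  obtain ⟨p₁, hp₁, hs₁⟩ := h₁.exists_path hh hu hv hne huv
  obtain ⟨p₂, hp₂, hs₂⟩ := h₂.exists_path hh hu hv hne huv
  obtain ⟨p₃, hp₃, hs₃⟩ := h₃.exists_path hh hu hv hne huv
  have far : ∀ {i j i' j' : ℕ}, (∀ k ∈ Set.uIcc i j, ∀ k' ∈ Set.uIcc i' j', k + 2 ≤ k') →
      ∀ k ∈ Set.uIcc i j, ∀ k' ∈ Set.uIcc i' j', k + 2 ≤ k' ∨ k' + 2 ≤ k :=
    fun hfar k hk k' hk' => Or.inl (hfar k hk k' hk')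
  have h₁₃ : ∀ k ∈ Set.uIcc i₁ j₁, ∀ k' ∈ Set.uIcc i₃ j₃, k + 2 ≤ k' := fun k hk k' hk' => by
    have := h₁₂ k hk i₂ Set.left_mem_uIcc
    have := h₂₃ i₂ Set.left_mem_uIcc k' hk'
    omega
  exact containsTheta_of_anticomplete hne huv hp₁ hp₂ hp₃ hs₁ hs₂ hs₃
    (hh.anticomplete_image (fun _ => h₁.le_of_mem) (fun _ => h₂.le_of_mem) (far h₁₂))
    (hh.anticomplete_image (fun _ => h₁.le_of_mem) (fun _ => h₃.le_of_mem) (far h₁₃))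
    (hh.anticomplete_image (fun _ => h₂.le_of_mem) (fun _ => h₃.le_of_mem) (far h₂₃))

theorem containsTheta_of_sandwich (hh : IsInducedPathEmb G L h) (hu : ∀ k ≤ L, h k ≠ u)
    (hv : ∀ k ≤ L, h k ≠ v) (hne : u ≠ v) (huv : ¬G.Adj u v) (hu0 : G.Adj u (h 0))
    (hv0 : G.Adj v (h 0)) {a b a' : ℕ} (ha : 2 ≤ a) (hab : a < b) (hba' : b < a') (ha' : a' ≤ L)
    (hua : G.Adj u (h a)) (hua' : G.Adj u (h a')) (hvb : G.Adj v (h b))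
    (hu_gap : ∀ k, a < k → k < a' → ¬G.Adj u (h k))
    (hv_gap : ∀ k, a ≤ k → k ≤ a' → k ≠ b → ¬G.Adj v (h k)) : ContainsTheta G := by
  obtain ⟨p₁, hp₁, hs₁⟩ := hh.exists_path_from (j := b) (by omega) (by omega) hu hua
    (fun k hk hka => by have := Set.mem_uIcc.1 hk; exact hu_gap k (by omega) (by omega))
  obtain ⟨p₂, hp₂, hs₂⟩ := hh.exists_path_from (j := b) ha' (by omega) hu hua'
    (fun k hk hka => by have := Set.mem_uIcc.1 hk; exact hu_gap k (by omega) (by omega))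
  obtain ⟨p₃, hp₃, hs₃⟩ := hh.exists_path_via_zero hu hv hne huv hu0 hv0 (by omega) (by omega) hvb
    (hu_gap b hab hba')
  have mem₁ : ∀ k ∈ Set.uIcc a b \ {b}, a ≤ k ∧ k < b := fun k hk => by
    have := Set.mem_uIcc.1 hk.1
    have : k ≠ b := hk.2
    omega
  have mem₂ : ∀ k ∈ Set.uIcc a' b \ {b}, b < k ∧ k ≤ a' := fun k hk => by
    have := Set.mem_uIcc.1 hk.1
    have : k ≠ b := hk.2
    omega
  have side : ∀ S : Set ℕ, (∀ k ∈ S, a ≤ k ∧ k ≤ a' ∧ k ≠ b) →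
      Anticomplete G (h '' S) {h 0, v} := by
    rintro S hS _ ⟨k, hk, rfl⟩ y (rfl | rfl) <;> have := hS k hk
    · refine hh.anticomplete_image (S := {k}) (T := {0}) ?_ ?_ ?_ _ ⟨k, rfl, rfl⟩ _
        ⟨0, rfl, rfl⟩ <;> simp only [Set.mem_singleton_iff, forall_eq] <;> omega
    · exact ⟨hv k (by omega), fun h' => hv_gap k (by omega) (by omega) (by omega) h'.symm⟩
  refine containsTheta_of_anticomplete (hu b (by omega)).symm (hu_gap b hab hba') hp₁ hp₂ hp₃
    hs₁ hs₂ hs₃ (hh.anticomplete_image ?_ ?_ ?_) (side _ ?_) (side _ ?_)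
  · exact fun k hk => by have := mem₁ k hk; omega
  · exact fun k hk => by have := mem₂ k hk; omega
  · exact fun k hk k' hk' => by have := mem₁ k hk; have := mem₂ k' hk'; omega
  · exact fun k hk => by have := mem₁ k hk; omega
  · exact fun k hk => by have := mem₂ k hk; omega

theorem containsTheta_of_common_of_same_side (hh : IsInducedPathEmb G L h)
    (hTri : G.CliqueFree 3) (hu : ∀ k ≤ L, h k ≠ u) (hv : ∀ k ≤ L, h k ≠ v) (hne : u ≠ v)
    (huv : ¬G.Adj u v) (hu0 : G.Adj u (h 0)) (hv0 : G.Adj v (h 0)) {c : ℕ} (hc : 0 < c)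
    (hcL : c ≤ L) (huc : G.Adj u (h c)) (hvc : G.Adj v (h c)) {a b : ℕ} (haL : a ≤ L)
    (hbL : b ≤ L) (hua : G.Adj u (h a)) (hvb : G.Adj v (h b))
    (hside : (0 < a ∧ a < c ∧ 0 < b ∧ b < c) ∨ (c < a ∧ c < b)) : ContainsTheta G := by
  obtain ⟨i, j, hl, hsub⟩ := exists_isLink haL hbL hua hvb
  have hl0 := isLink_self (Nat.zero_le L) hu0 hv0
  have hlc := isLink_self hcL huc hvc
  rcases hside with ⟨ha0, hac, hb0, hbc⟩ | ⟨hca, hcb⟩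
  · have := hh.add_two_le hTri hu0 hua ha0 haL
    have := hh.add_two_le hTri hua huc hac hcL
    have := hh.add_two_le hTri hv0 hvb hb0 hbL
    have := hh.add_two_le hTri hvb hvc hbc hcL
    refine containsTheta_of_three_links hh hu hv hne huv hl0 hl hlc ?_ ?_ <;>
      intro k hk k' hk' <;> simp only [Set.uIcc_self, Set.mem_singleton_iff] at hk hk'
    · have := Set.mem_uIcc.1 (hsub hk')
      omega
    · have := Set.mem_uIcc.1 (hsub hk)
      omega
  · have := hh.add_two_le hTri hu0 huc hc hcL
    have := hh.add_two_le hTri huc hua hca haL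
    have := hh.add_two_le hTri hvc hvb hcb hbL
    refine containsTheta_of_three_links hh hu hv hne huv hl0 hlc hl ?_ ?_ <;>
      intro k hk k' hk' <;> simp only [Set.uIcc_self, Set.mem_singleton_iff] at hk hk'
    · omega
    · have := Set.mem_uIcc.1 (hsub hk')
      omega

theorem containsTheta_of_common_interior (hh : IsInducedPathEmb G L h)
    (hTri : G.CliqueFree 3) (hu : ∀ k ≤ L, h k ≠ u) (hv : ∀ k ≤ L, h k ≠ v) (hne : u ≠ v)
    (huv : ¬G.Adj u v) (hu0 : G.Adj u (h 0)) (hv0 : G.Adj v (h 0))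
    (hucard : 2 < {k | k ≤ L ∧ G.Adj u (h k)}.ncard)
    (hvcard : 2 < {k | k ≤ L ∧ G.Adj v (h k)}.ncard)
    (hAB : ∃ a b, 0 < a ∧ a < b ∧ b ≤ L ∧ G.Adj u (h a) ∧ G.Adj v (h b))
    (hBA : ∃ a b, 0 < b ∧ b < a ∧ a ≤ L ∧ G.Adj u (h a) ∧ G.Adj v (h b))
    {c : ℕ} (hc : 0 < c) (hcL : c ≤ L) (huc : G.Adj u (h c)) (hvc : G.Adj v (h c)) :
    ContainsTheta G := by
  have same : ∀ {a b : ℕ}, a ≤ L → b ≤ L → G.Adj u (h a) → G.Adj v (h b) →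
      (0 < a ∧ a < c ∧ 0 < b ∧ b < c) ∨ (c < a ∧ c < b) → ContainsTheta G :=
    containsTheta_of_common_of_same_side hh hTri hu hv hne huv hu0 hv0 hc hcL huc hvc
  obtain ⟨a, ⟨haL, hua⟩, ha0, hac⟩ := Set.exists_mem_ne_ne_of_two_lt_ncard hucard 0 c
  obtain ⟨b, ⟨hbL, hvb⟩, hb0, hbc⟩ := Set.exists_mem_ne_ne_of_two_lt_ncard hvcard 0 c
  rcases hac.lt_or_gt with hac | hca <;> rcases hbc.lt_or_gt with hbc | hcb
  · exact same haL hbL hua hvb (Or.inl ⟨by omega, hac, by omega, hbc⟩)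
  · obtain ⟨a', b', hb', hba', ha'L, hua', hvb'⟩ := hBA
    rcases lt_or_ge c a' with hca' | ha'c
    · exact same ha'L hbL hua' hvb (Or.inr ⟨hca', hcb⟩)
    · exact same haL (by omega) hua hvb' (Or.inl ⟨by omega, hac, hb', by omega⟩)
  · obtain ⟨a', b', ha', hab', hb'L, hua', hvb'⟩ := hAB
    rcases lt_or_ge c b' with hcb' | hb'c
    · exact same haL hb'L hua hvb' (Or.inr ⟨hca, hcb'⟩)
    · exact same (by omega) hbL hua' hvb (Or.inl ⟨ha', by omega, by omega, hbc⟩)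
  · exact same haL hbL hua hvb (Or.inr ⟨hca, hcb⟩)

theorem containsTheta_of_pair_inside_pair (hh : IsInducedPathEmb G L h)
    (hTri : G.CliqueFree 3) (hu : ∀ k ≤ L, h k ≠ u) (hv : ∀ k ≤ L, h k ≠ v) (hne : u ≠ v)
    (huv : ¬G.Adj u v) (hu0 : G.Adj u (h 0)) (hv0 : G.Adj v (h 0)) {a b b' a' : ℕ}
    (ha : 0 < a) (hab : a < b) (hbb' : b < b') (hb'a' : b' < a') (ha' : a' ≤ L)
    (hua : G.Adj u (h a)) (hvb : G.Adj v (h b)) (hvb' : G.Adj v (h b'))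
    (hua' : G.Adj u (h a')) : ContainsTheta G := by
  have := hh.add_two_le hTri hu0 hua ha (by omega)
  have := hh.add_two_le hTri hvb hvb' hbb' (by omega)
  obtain ⟨i₁, j₁, hl₁, hsub₁⟩ := exists_isLink (L := L) (by omega) (by omega) hua hvb
  obtain ⟨i₂, j₂, hl₂, hsub₂⟩ := exists_isLink ha' (by omega) hua' hvb'
  refine containsTheta_of_three_links hh hu hv hne huv (isLink_self (Nat.zero_le L) hu0 hv0)
    hl₁ hl₂ ?_ ?_ <;> intro k hk k' hk'
  · simp only [Set.uIcc_self, Set.mem_singleton_iff] at hk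
    have := Set.mem_uIcc.1 (hsub₁ hk')
    omega
  · have := Set.mem_uIcc.1 (hsub₁ hk)
    have := Set.mem_uIcc.1 (hsub₂ hk')
    omega

theorem containsTheta_of_first_neighbor_between (hh : IsInducedPathEmb G L h)
    (hTri : G.CliqueFree 3) (hu : ∀ k ≤ L, h k ≠ u) (hv : ∀ k ≤ L, h k ≠ v) (hne : u ≠ v)
    (huv : ¬G.Adj u v) (hu0 : G.Adj u (h 0)) (hv0 : G.Adj v (h 0))
    (hnc : ∀ k, 0 < k → k ≤ L → G.Adj u (h k) → ¬G.Adj v (h k))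
    {a b a' : ℕ} (ha : 0 < a) (hab : a < b) (hba' : b < a') (ha' : a' ≤ L)
    (hua : G.Adj u (h a)) (hvb : G.Adj v (h b)) (hua' : G.Adj u (h a'))
    (hfirst : ∀ k, 0 < k → k < b → ¬G.Adj v (h k)) : ContainsTheta G := by
  classical
  have hnub : ¬G.Adj u (h b) := fun hub => hnc b (by omega) (by omega) hub hvb
  have hex : ∃ k, b < k ∧ k ≤ L ∧ G.Adj u (h k) := ⟨a', hba', ha', hua'⟩
  set aR := Nat.find hex
  obtain ⟨hbR, hRL, huR⟩ := Nat.find_spec hex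
  by_cases hmid : ∃ b', b < b' ∧ b' < aR ∧ G.Adj v (h b')
  · obtain ⟨b', hbb', hb'R, hvb'⟩ := hmid
    exact containsTheta_of_pair_inside_pair hh hTri hu hv hne huv hu0 hv0 ha hab hbb' hb'R hRL
      hua hvb hvb' huR
  · push Not at hmid
    have ha2 := hh.add_two_le hTri hu0 hua ha (by omega)
    have hR_gap : ∀ k, b < k → k < aR → ¬G.Adj u (h k) := fun k hbk hkR huk =>
      Nat.find_min hex hkR ⟨hbk, by omega, huk⟩
    set aL := Nat.findGreatest (fun k => G.Adj u (h k)) b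
    have haL : a ≤ aL := Nat.le_findGreatest hab.le hua
    have hLb : aL ≤ b := Nat.findGreatest_le b
    have huL : G.Adj u (h aL) := Nat.findGreatest_spec (P := fun k => G.Adj u (h k)) hab.le hua
    have hLb' : aL < b := lt_of_le_of_ne hLb fun hLb => hnub (hLb ▸ huL)
    refine containsTheta_of_sandwich hh hu hv hne huv hu0 hv0 (by omega) hLb' hbR hRL huL huR hvb
      (fun k hLk hkR huk => ?_) (fun k hLk hkR hkb hvk => ?_)
    · rcases lt_trichotomy k b with hkb | rfl | hbk
      · exact Nat.findGreatest_is_greatest (P := fun k => G.Adj u (h k)) hLk hkb.le huk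
      · exact hnub huk
      · exact hR_gap k hbk hkR huk
    · rcases hkb.lt_or_gt with hkb | hbk
      · exact hfirst k (by omega) hkb hvk
      · rcases hkR.lt_or_eq with hkR | rfl
        · exact hmid k hbk hkR hvk
        · exact hnc _ (by omega) hRL huR hvk

theorem containsTheta_of_no_common_interior (hh : IsInducedPathEmb G L h)
    (hTri : G.CliqueFree 3) (hu : ∀ k ≤ L, h k ≠ u) (hv : ∀ k ≤ L, h k ≠ v) (hne : u ≠ v)
    (huv : ¬G.Adj u v) (hu0 : G.Adj u (h 0)) (hv0 : G.Adj v (h 0))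
    (hAB : ∃ a b, 0 < a ∧ a < b ∧ b ≤ L ∧ G.Adj u (h a) ∧ G.Adj v (h b))
    (hBA : ∃ a b, 0 < b ∧ b < a ∧ a ≤ L ∧ G.Adj u (h a) ∧ G.Adj v (h b))
    (hnc : ∀ k, 0 < k → k ≤ L → G.Adj u (h k) → ¬G.Adj v (h k)) : ContainsTheta G := by
  classical
  obtain ⟨a₁, b₁, ha₁, hab₁, hb₁L, hua₁, hvb₁⟩ := hAB
  obtain ⟨a₂, b₂, hb₂, hba₂, ha₂L, hua₂, hvb₂⟩ := hBA
  have hexu : ∃ a, 0 < a ∧ a ≤ L ∧ G.Adj u (h a) := ⟨a₁, ha₁, by omega, hua₁⟩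
  have hexv : ∃ b, 0 < b ∧ b ≤ L ∧ G.Adj v (h b) := ⟨b₂, hb₂, by omega, hvb₂⟩
  obtain ⟨ha, haL, hua⟩ := Nat.find_spec hexu
  obtain ⟨hb, hbL, hvb⟩ := Nat.find_spec hexv
  have hfu : ∀ k, 0 < k → k < Nat.find hexu → ¬G.Adj u (h k) := fun k hk hka huk =>
    Nat.find_min hexu hka ⟨hk, by omega, huk⟩
  have hfv : ∀ k, 0 < k → k < Nat.find hexv → ¬G.Adj v (h k) := fun k hk hkb hvk =>
    Nat.find_min hexv hkb ⟨hk, by omega, hvk⟩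
  have hne' : Nat.find hexu ≠ Nat.find hexv := fun heq => hnc _ ha haL hua (by rw [heq]; exact hvb)
  rcases hne'.lt_or_gt with hlt | hgt
  · have : Nat.find hexv ≤ b₂ := Nat.find_min' hexv ⟨hb₂, by omega, hvb₂⟩
    exact containsTheta_of_first_neighbor_between hh hTri hu hv hne huv hu0 hv0 hnc ha hlt
      (by omega) ha₂L hua hvb hua₂ hfv
  · have : Nat.find hexu ≤ a₁ := Nat.find_min' hexu ⟨ha₁, by omega, hua₁⟩
    exact containsTheta_of_first_neighbor_between hh hTri hv hu hne.symm (fun h' => huv h'.symm)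
      hv0 hu0 (fun k hk hkL hvk huk => hnc k hk hkL huk hvk) hb hgt (by omega) hb₁L hvb hua hvb₁
      hfu

theorem containsTheta_of_common_end (hh : IsInducedPathEmb G L h)
    (hTri : G.CliqueFree 3) (hu : ∀ k ≤ L, h k ≠ u) (hv : ∀ k ≤ L, h k ≠ v) (hne : u ≠ v)
    (huv : ¬G.Adj u v) (hu0 : G.Adj u (h 0)) (hv0 : G.Adj v (h 0))
    (hucard : 2 < {k | k ≤ L ∧ G.Adj u (h k)}.ncard)
    (hvcard : 2 < {k | k ≤ L ∧ G.Adj v (h k)}.ncard)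
    (hAB : ∃ a b, 0 < a ∧ a < b ∧ b ≤ L ∧ G.Adj u (h a) ∧ G.Adj v (h b))
    (hBA : ∃ a b, 0 < b ∧ b < a ∧ a ≤ L ∧ G.Adj u (h a) ∧ G.Adj v (h b)) :
    ContainsTheta G := by
  by_cases hc : ∃ c, 0 < c ∧ c ≤ L ∧ G.Adj u (h c) ∧ G.Adj v (h c)
  · obtain ⟨c, hc, hcL, huc, hvc⟩ := hc
    exact containsTheta_of_common_interior hh hTri hu hv hne huv hu0 hv0 hucard hvcard hAB hBA
      hc hcL huc hvc
  · push Not at hc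
    exact containsTheta_of_no_common_interior hh hTri hu hv hne huv hu0 hv0 hAB hBA hc

variable {n : ℕ} {f : ZMod n → V}

lemma ZMod.natCast_inj_of_lt {k l : ℕ} (hk : k < n) (hl : l < n) :
    (k : ZMod n) = l ↔ k = l := by
  rw [ZMod.natCast_eq_natCast_iff', Nat.mod_eq_of_lt hk, Nat.mod_eq_of_lt hl]

lemma ZMod.exists_eq_add_natCast [NeZero n] (m m' : ZMod n) : ∃ k < n, m' = m + k :=
  ⟨(m' - m).val, ZMod.val_lt _, by rw [ZMod.natCast_zmod_val, add_sub_cancel]⟩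

lemma NestedCfg.symm {u v : V} (h : NestedCfg G n f v u) : NestedCfg G n f u v := by
  obtain ⟨i, d, hd, hdn, hv, hu⟩ := h
  refine ⟨i + d, n - d, by omega, by omega, hu, fun m hm => ?_⟩
  obtain ⟨e, he, rfl⟩ := hv m hm
  refine ⟨e, by omega, ?_⟩
  rw [add_assoc i, ← Nat.cast_add, Nat.add_sub_cancel' hdn.le, ZMod.natCast_self, add_zero]

namespace IsHoleEmb

lemma isInducedPathEmb (hH : IsHoleEmb G n f) (r : ZMod n) :
    IsInducedPathEmb G (n - 2) (fun k : ℕ => f (r + k)) := by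
  obtain ⟨hn, hinj, hadj⟩ := hH
  refine ⟨fun i hi j hj hij => ?_, fun i hi j hj => ?_⟩
  · simp only [Set.mem_Iic] at hi hj
    exact (ZMod.natCast_inj_of_lt (by omega) (by omega)).1 (add_left_cancel (hinj hij))
  · rw [hadj, add_assoc, add_assoc, add_right_inj, add_right_inj, ← Nat.cast_add_one,
      ← Nat.cast_add_one, ZMod.natCast_inj_of_lt (by omega) (by omega),
      ZMod.natCast_inj_of_lt (by omega) (by omega)]
    omega

lemma le_sub_two_of_adj (hH : IsHoleEmb G n f) (hTri : G.CliqueFree 3) {w : V} {m : ZMod n}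
    {k : ℕ} (hk : k < n) (hwm : G.Adj w (f m)) (hwk : G.Adj w (f (m + k))) : k ≤ n - 2 := by
  by_contra! hk'
  refine hTri.not_adj_of_adj_of_adj hwk hwm ((hH.2.2 _ _).2 (Or.inl ?_))
  rw [add_assoc, ← Nat.cast_add_one, show k + 1 = n by omega, ZMod.natCast_self, add_zero]

lemma ncard_setOf_adj_le (hH : IsHoleEmb G n f) (hTri : G.CliqueFree 3) {w : V} {m : ZMod n}
    (hwm : G.Adj w (f m)) :
    {m' | G.Adj w (f m')}.ncard ≤ {k : ℕ | k ≤ n - 2 ∧ G.Adj w (f (m + k))}.ncard := by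
  have : NeZero n := ⟨by have := hH.1; omega⟩
  have hfin : {k : ℕ | k ≤ n - 2 ∧ G.Adj w (f (m + k))}.Finite :=
    (Set.finite_Iic (n - 2)).subset fun k hk => hk.1
  calc {m' | G.Adj w (f m')}.ncard
      ≤ ((fun k : ℕ => m + k) '' {k : ℕ | k ≤ n - 2 ∧ G.Adj w (f (m + k))}).ncard := by
        refine Set.ncard_le_ncard (fun m' hm' => ?_) (hfin.image _)
        obtain ⟨k, hk, rfl⟩ := ZMod.exists_eq_add_natCast m m'
        exact ⟨k, ⟨hH.le_sub_two_of_adj hTri hk hwm hm', hm'⟩, rfl⟩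
    _ ≤ _ := Set.ncard_image_le hfin

lemma nestedCfg_of_forall_not_lt (hH : IsHoleEmb G n f) (hTri : G.CliqueFree 3) {u v : V}
    {m : ZMod n} (hum : G.Adj u (f m)) (hvm : G.Adj v (f m))
    (hvu : ∀ a b, 0 < b → b < a → a ≤ n - 2 → G.Adj u (f (m + a)) → ¬G.Adj v (f (m + b))) :
    NestedCfg G n f u v := by
  classical
  have hn := hH.1
  have : NeZero n := ⟨by omega⟩
  set g := Nat.findGreatest (fun k => G.Adj u (f (m + k))) (n - 2)
  have hg : g ≤ n - 2 := Nat.findGreatest_le _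
  -- split after the last neighbour of `u`; `max 1` keeps the arc nonempty if there is none
  refine ⟨m, max 1 g, by omega, by omega, fun m' hm' => ?_, fun m' hm' => ?_⟩
  · obtain ⟨k, hk, rfl⟩ := ZMod.exists_eq_add_natCast m m'
    have := Nat.le_findGreatest (P := fun k => G.Adj u (f (m + k)))
      (hH.le_sub_two_of_adj hTri hk hum hm') hm'
    exact ⟨k, by omega, rfl⟩
  · obtain ⟨k, hk, rfl⟩ := ZMod.exists_eq_add_natCast m m'
    have hkn := hH.le_sub_two_of_adj hTri hk hvm hm'
    rcases Nat.eq_zero_or_pos k with rfl | hk0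
    · refine ⟨n - max 1 g, le_rfl, ?_⟩
      rw [add_assoc, ← Nat.cast_add, Nat.add_sub_cancel' (by omega), ZMod.natCast_self,
        Nat.cast_zero]
    · have hgk : max 1 g ≤ k := by
        by_contra! hkg
        exact hvu g k hk0 (by omega) hg
          (Nat.findGreatest_of_ne_zero (P := fun k => G.Adj u (f (m + k))) rfl (by omega)) hm'
      refine ⟨k - max 1 g, by omega, ?_⟩
      rw [add_assoc, ← Nat.cast_add, Nat.add_sub_cancel' hgk]

end IsHoleEmb

end

/-- In a (theta, triangle)-free graph, if a 2-wheel with non-adjacent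
centers is not nested, then the centers have no common neighbor on the rim. -/
theorem statement5 (G : SimpleGraph V) (hTheta : ¬ContainsTheta G) (hTri : G.CliqueFree 3)
    (n : ℕ) (f : ZMod n → V) (u v : V)
    (hW : Is2WheelCfg G n f u v) (huv : ¬G.Adj u v)
    (hnot : ¬NestedCfg G n f u v) :
    ∀ m : ZMod n, ¬(G.Adj u (f m) ∧ G.Adj v (f m)) := by
  rintro m ⟨hum, hvm⟩
  obtain ⟨hH, hne, hu, hv, hucard, hvcard⟩ := hW
  have hoff : ∀ {w}, w ∉ Set.range f → ∀ k ≤ n - 2, f (m + k) ≠ w :=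
    fun hw k _ hk => hw ⟨_, hk⟩
  refine hTheta (containsTheta_of_common_end (hH.isInducedPathEmb m) hTri (hoff hu)
    (hoff hv) hne huv (by simpa using hum) (by simpa using hvm)
    (hucard.trans (hH.ncard_setOf_adj_le hTri hum)) (hvcard.trans (hH.ncard_setOf_adj_le hTri hvm)) ?_ ?_)
  · by_contra! hAB
    exact hnot (hH.nestedCfg_of_forall_not_lt hTri hvm hum
      fun a b hb hba ha hva hub => hAB b a hb hba ha hub hva).symm
  · by_contra! hBA
    exact hnot (hH.nestedCfg_of_forall_not_lt hTri hum hvm hBA)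
end

section
/- If a butterfly-free graph G contains a (4k+1)-span-wheel, where k ≥ 0 is an integer, then G contains S_{k+1, k+1, k+1} (as an induced subgraph). -/
open SimpleGraph

variable {V : Type} [Fintype V] [DecidableEq V]

/-!
Let `v` be the middle centre of the `(4k+1)`-span-wheel. Each of the `2k` centres before `v` has
at least three neighbours on the hole, hence two on one of the paths `P_A`, `P_B`; by the ordering
condition the outer one of them lies in the gap between the neighbours of `v` that passes
through `x`, and distinct centres give distinct vertices. The same holds for the `2k` centres
after `v` and the gap through `y`. So the neighbours of `v` on the hole lie in two blocks, one in
each path, separated by two gaps of at least `2k + 1` vertices each.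

If a block has two non-adjacent ends, `v` together with three paths of length `k` leaving block
ends into the gaps is an `S_{k+1,k+1,k+1}`. Otherwise each block is a vertex or an edge; two edges
make `v` the centre of a butterfly, and for an edge and a single vertex `h`, the spider is rooted
at `h`, with two legs along the hole and a third one starting with `v`.
-/

open Finset

theorem ZMod.intCast_eq_intCast_iff_of_lt {n : ℕ} {q r : ℤ} (h₁ : q - r < n) (h₂ : r - q < n) :
    (q : ZMod n) = r ↔ q = r := by
  rw [ZMod.intCast_eq_intCast_iff_dvd_sub]
  refine ⟨fun h => ?_, fun h => by simp [h]⟩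
  have := Int.eq_zero_of_abs_lt_dvd h (abs_sub_lt_iff.2 ⟨by omega, by omega⟩)
  omega

theorem ZMod.exists_intCast_eq {n : ℕ} [NeZero n] (m : ZMod n) (lo : ℤ) :
    ∃ q : ℤ, lo ≤ q ∧ q < lo + n ∧ (q : ZMod n) = m := by
  have hn : (0 : ℤ) < n := by have := NeZero.ne n; omega
  refine ⟨lo + (m.val - lo) % n, by have := Int.emod_nonneg (m.val - lo) hn.ne'; omega,
    by have := Int.emod_lt_of_pos (m.val - lo) hn; omega, ?_⟩
  rw [Int.cast_add, ZMod.intCast_mod, Int.cast_sub, Int.cast_natCast, ZMod.natCast_zmod_val]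
  ring

theorem card_le_of_ordered_sides {ι : Type*} [LinearOrder ι] (s : Finset ι) (d : ι)
    (A B : ι → Finset ℤ) (lo hi α β : ℤ) (hs : ∀ i ∈ s, i < d)
    (hAB : ∀ i ∈ s, ∀ j ∈ s, Disjoint (A i) (B j))
    (hlo : ∀ i ∈ s, ∀ t ∈ A i, lo ≤ t) (hhi : ∀ i ∈ s, ∀ t ∈ B i, t ≤ hi)
    (hcard : ∀ i ∈ s, 3 ≤ #(A i) + #(B i))
    (hA : ∀ i j, i < j → ∀ t ∈ A i, ∀ t' ∈ A j, t ≤ t')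
    (hB : ∀ i j, i < j → ∀ t ∈ B i, ∀ t' ∈ B j, t' ≤ t)
    (hα : α ∈ A d) (hβ : β ∈ B d) :
    #s ≤ #(Ico lo α) + #(Ioc β hi) := by
  -- inject `s` into `[lo, α) ∪ (β, hi]`: send `i` to a non-maximal element of `A i`
  -- or to a non-minimal element of `B i`
  have hwit : ∀ i ∈ s, ∃ t, (t ∈ A i ∧ ∃ t' ∈ A i, t < t') ∨ (t ∈ B i ∧ ∃ t' ∈ B i, t' < t) := by
    intro i hi
    by_cases h : 1 < #(A i)
    · obtain ⟨t, ht, t', ht', htt⟩ := (one_lt_card_iff_nontrivial.1 h).exists_lt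
      exact ⟨t, .inl ⟨ht, t', ht', htt⟩⟩
    · have h' : 1 < #(B i) := by have := hcard i hi; omega
      obtain ⟨t, ht, t', ht', htt⟩ := (one_lt_card_iff_nontrivial.1 h').exists_lt
      exact ⟨t', .inr ⟨ht', t, ht, htt⟩⟩
  choose! ψ hψ using hwit
  have hmaps : ∀ i ∈ s, ψ i ∈ Ico lo α ∪ Ioc β hi := by
    intro i hi
    rcases hψ i hi with ⟨ht, t', ht', hlt⟩ | ⟨ht, t', ht', hlt⟩
    · have := hA i d (hs i hi) t' ht' α hα
      have := hlo i hi _ ht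
      simp only [mem_union, mem_Ico]; omega
    · have := hB i d (hs i hi) t' ht' β hβ
      have := hhi i hi _ ht
      simp only [mem_union, mem_Ioc]; omega
  have hne : ∀ i ∈ s, ∀ j ∈ s, i < j → ψ i ≠ ψ j := by
    intro i hi j hj hij heq
    rcases hψ i hi with ⟨hti, t, ht, hlt⟩ | ⟨hti, t, ht, hlt⟩ <;>
      rcases hψ j hj with ⟨htj, -⟩ | ⟨htj, -⟩
    · have := hA i j hij t ht _ htj; omega
    · exact disjoint_left.1 (hAB i hi j hj) hti (heq ▸ htj)
    · exact disjoint_left.1 (hAB j hj i hi) htj (heq ▸ hti)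
    · have := hB i j hij t ht _ htj; omega
  have hinj : Set.InjOn ψ s := by
    intro i hi j hj h
    by_contra hij
    rcases lt_or_gt_of_ne hij with hij | hij
    exacts [hne i hi j hj hij h, hne j hj i hi hij h.symm]
  calc #s ≤ #(Ico lo α ∪ Ioc β hi) := card_le_card_of_injOn ψ hmaps hinj
    _ ≤ #(Ico lo α) + #(Ioc β hi) := card_union_le _ _

-- `ContainsSpider G k` unfolds to `∃ r g, IsSpiderFor G.Adj k r g`.
def IsSpiderFor {α : Type*} (adj : α → α → Prop) (k : ℕ) (r : α) (g : Fin 3 → Fin k → α) :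
    Prop :=
  (∀ j m, g j m ≠ r) ∧
  (∀ j₁ m₁ j₂ m₂, g j₁ m₁ = g j₂ m₂ → j₁ = j₂ ∧ m₁ = m₂) ∧
  (∀ j m, adj r (g j m) ↔ (m : ℕ) = 0) ∧
  (∀ j₁ m₁ j₂ m₂, adj (g j₁ m₁) (g j₂ m₂) ↔
    j₁ = j₂ ∧ ((m₁ : ℕ) + 1 = m₂ ∨ (m₂ : ℕ) + 1 = m₁))

theorem IsSpiderFor.map {α β : Type*} {adj : α → α → Prop} {adj' : β → β → Prop} {k : ℕ}
    {r : α} {g : Fin 3 → Fin k → α} (h : IsSpiderFor adj k r g) (φ : α → β) {S : Set α}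
    (hr : r ∈ S) (hg : ∀ j m, g j m ∈ S) (hinj : S.InjOn φ)
    (hadj : ∀ x ∈ S, ∀ y ∈ S, adj' (φ x) (φ y) ↔ adj x y) :
    IsSpiderFor adj' k (φ r) (fun j m => φ (g j m)) := by
  obtain ⟨hr', hinj', hroot, hlegs⟩ := h
  refine ⟨fun j m he => hr' j m (hinj (hg j m) hr he), fun j₁ m₁ j₂ m₂ he =>
    hinj' j₁ m₁ j₂ m₂ (hinj (hg _ _) (hg _ _) he), fun j m => ?_, fun j₁ m₁ j₂ m₂ => ?_⟩
  · rw [hadj _ hr _ (hg j m), hroot]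
  · rw [hadj _ (hg _ _) _ (hg _ _), hlegs]

/-- Integer positions along a hole, consecutive ones adjacent, and an apex `none` adjacent to
the positions in `N`. -/
def apexAdj (N : Set ℤ) : Option ℤ → Option ℤ → Prop
  | none, none => False
  | none, some q | some q, none => q ∈ N
  | some q, some r => r = q + 1 ∨ q = r + 1

/-- An apex `v` off a hole of length `n`, with its neighbours in integer positions along the hole:
over one turn `(b₂ - n, a₁ + n)` they lie in two blocks `[a₁, a₂]` and `[b₁, b₂]` with ends in
`N`, separated by gaps of at least `2k + 1` positions. -/
structure TwoBlocks (N : Set ℤ) (n k : ℕ) (a₁ a₂ b₁ b₂ : ℤ) : Prop where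
  le_a : a₁ ≤ a₂
  le_b : b₁ ≤ b₂
  gap_ab : a₂ + 2 * k + 2 ≤ b₁
  gap_ba : b₂ + 2 * k + 2 ≤ a₁ + n
  a₁_mem : a₁ ∈ N
  a₂_mem : a₂ ∈ N
  b₁_mem : b₁ ∈ N
  b₂_mem : b₂ ∈ N
  mem_blocks : ∀ q, b₂ - n < q → q < a₁ + n → q ∈ N → (a₁ ≤ q ∧ q ≤ a₂) ∨ (b₁ ≤ q ∧ q ≤ b₂)

namespace TwoBlocks

variable {N : Set ℤ} {n k : ℕ} {a₁ a₂ b₁ b₂ : ℤ}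

theorem mem_iff (h : TwoBlocks N n k a₁ a₂ b₁ b₂) {q : ℤ} (h₁ : b₂ - n < q) (h₂ : q < a₁ + n)
    (ha : ¬(a₁ < q ∧ q < a₂)) (hb : ¬(b₁ < q ∧ q < b₂)) :
    q ∈ N ↔ q = a₁ ∨ q = a₂ ∨ q = b₁ ∨ q = b₂ := by
  refine ⟨fun hq => ?_, ?_⟩
  · have := h.mem_blocks q h₁ h₂ hq; omega
  · rintro (rfl | rfl | rfl | rfl)
    exacts [h.a₁_mem, h.a₂_mem, h.b₁_mem, h.b₂_mem]

theorem isSpiderFor_of_two_le_a (h : TwoBlocks N n k a₁ a₂ b₁ b₂) (ha : a₁ + 2 ≤ a₂) :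
    IsSpiderFor (apexAdj N) (k + 1) none fun j m => some (![a₁ - m, a₂ + m, b₁ - m] j) := by
  have := h.le_b; have := h.gap_ab; have := h.gap_ba
  refine ⟨fun _ _ => Option.some_ne_none _, ?_, ?_, ?_⟩
  · intro j₁ m₁ j₂ m₂ he
    fin_cases j₁ <;> fin_cases j₂ <;> simp at he ⊢ <;> omega
  · intro j m
    fin_cases j <;> simp only [apexAdj] <;> simp <;>
      rw [h.mem_iff (by omega) (by omega) (by omega) (by omega), Fin.ext_iff, Fin.val_zero] <;>
      omega
  · intro j₁ m₁ j₂ m₂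
    fin_cases j₁ <;> fin_cases j₂ <;> simp [apexAdj] <;> omega

theorem isSpiderFor_of_two_le_b (h : TwoBlocks N n k a₁ a₂ b₁ b₂) (hb : b₁ + 2 ≤ b₂) :
    IsSpiderFor (apexAdj N) (k + 1) none fun j m => some (![a₁ - m, b₁ - m, b₂ + m] j) := by
  have := h.le_a; have := h.gap_ab; have := h.gap_ba
  refine ⟨fun _ _ => Option.some_ne_none _, ?_, ?_, ?_⟩
  · intro j₁ m₁ j₂ m₂ he
    fin_cases j₁ <;> fin_cases j₂ <;> simp at he ⊢ <;> omega
  · intro j m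
    fin_cases j <;> simp only [apexAdj] <;> simp <;>
      rw [h.mem_iff (by omega) (by omega) (by omega) (by omega), Fin.ext_iff, Fin.val_zero] <;>
      omega
  · intro j₁ m₁ j₂ m₂
    fin_cases j₁ <;> fin_cases j₂ <;> simp [apexAdj] <;> omega

theorem isSpiderFor_of_edge_vertex (h : TwoBlocks N n k a₁ a₂ b₁ b₂) (ha : a₂ = a₁ + 1)
    (hb : b₂ = b₁) :
    IsSpiderFor (apexAdj N) (k + 1) (some b₁) fun j m =>
      ![some (b₁ + 1 + m), some (b₁ - 1 - m),
        if (m : ℕ) = 0 then none else some (a₂ + m - 1)] j := by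
  have := h.gap_ab; have := h.gap_ba
  refine ⟨?_, ?_, ?_, ?_⟩
  · intro j m
    by_cases hm : (m : ℕ) = 0 <;> fin_cases j <;> simp [hm] <;> omega
  · intro j₁ m₁ j₂ m₂ he
    by_cases hm₁ : (m₁ : ℕ) = 0 <;> by_cases hm₂ : (m₂ : ℕ) = 0 <;>
      fin_cases j₁ <;> fin_cases j₂ <;> simp [hm₁, hm₂, Fin.ext_iff] at he ⊢ <;> omega
  · intro j m
    by_cases hm : (m : ℕ) = 0 <;> fin_cases j <;> simp [apexAdj, hm]
    all_goals first | omega | exact h.b₁_mem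
  · intro j₁ m₁ j₂ m₂
    by_cases hm₁ : (m₁ : ℕ) = 0 <;> by_cases hm₂ : (m₂ : ℕ) = 0 <;>
      fin_cases j₁ <;> fin_cases j₂ <;> simp [apexAdj, hm₁, hm₂]
    all_goals first | omega | rw [h.mem_iff (by omega) (by omega) (by omega) (by omega)]; omega

theorem isSpiderFor_of_vertex_edge (h : TwoBlocks N n k a₁ a₂ b₁ b₂) (ha : a₂ = a₁)
    (hb : b₂ = b₁ + 1) :
    IsSpiderFor (apexAdj N) (k + 1) (some a₁) fun j m =>
      ![some (a₁ - 1 - m), some (a₁ + 1 + m),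
        if (m : ℕ) = 0 then none else some (b₁ + 1 - m)] j := by
  have := h.gap_ab; have := h.gap_ba
  refine ⟨?_, ?_, ?_, ?_⟩
  · intro j m
    by_cases hm : (m : ℕ) = 0 <;> fin_cases j <;> simp [hm] <;> omega
  · intro j₁ m₁ j₂ m₂ he
    by_cases hm₁ : (m₁ : ℕ) = 0 <;> by_cases hm₂ : (m₂ : ℕ) = 0 <;>
      fin_cases j₁ <;> fin_cases j₂ <;> simp [hm₁, hm₂, Fin.ext_iff] at he ⊢ <;> omega
  · intro j m
    by_cases hm : (m : ℕ) = 0 <;> fin_cases j <;> simp [apexAdj, hm]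
    all_goals first | omega | exact h.a₁_mem
  · intro j₁ m₁ j₂ m₂
    by_cases hm₁ : (m₁ : ℕ) = 0 <;> by_cases hm₂ : (m₂ : ℕ) = 0 <;>
      fin_cases j₁ <;> fin_cases j₂ <;> simp [apexAdj, hm₁, hm₂]
    all_goals first | omega | rw [h.mem_iff (by omega) (by omega) (by omega) (by omega)]; omega

end TwoBlocks

section

variable {W : Type} {G : SimpleGraph W} {n : ℕ} {f : ZMod n → W}

theorem IsHoleEmb.apply_intCast_eq_iff (hole : IsHoleEmb G n f) {q r : ℤ} (h₁ : q - r < n)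
    (h₂ : r - q < n) : f q = f r ↔ q = r :=
  hole.2.1.eq_iff.trans (ZMod.intCast_eq_intCast_iff_of_lt h₁ h₂)

theorem IsHoleEmb.adj_intCast_iff (hole : IsHoleEmb G n f) {q r : ℤ} (h₁ : q - r ≤ n - 2)
    (h₂ : r - q ≤ n - 2) : G.Adj (f q) (f r) ↔ r = q + 1 ∨ q = r + 1 := by
  rw [hole.2.2, ← Int.cast_one, ← Int.cast_add, ← Int.cast_add,
    ZMod.intCast_eq_intCast_iff_of_lt (by omega) (by omega),
    ZMod.intCast_eq_intCast_iff_of_lt (by omega) (by omega)]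

-- A window of `n - 1` consecutive positions of the hole induces a path.
theorem IsHoleEmb.containsSpider_of_apexAdj (hole : IsHoleEmb G n f) {v : W}
    (hv : v ∉ Set.range f) {k : ℕ} (lo : ℤ) {r : Option ℤ} {g : Fin 3 → Fin k → Option ℤ}
    (h : IsSpiderFor (apexAdj {q | G.Adj v (f q)}) k r g)
    (hr : ∀ q ∈ r, lo ≤ q ∧ q ≤ lo + n - 2)
    (hg : ∀ j m, ∀ q ∈ g j m, lo ≤ q ∧ q ≤ lo + n - 2) :
    ContainsSpider G k := by
  let S : Set (Option ℤ) := {x | ∀ q ∈ x, lo ≤ q ∧ q ≤ lo + n - 2}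
  refine ⟨_, _, h.map (fun x => x.elim v fun q => f q) (S := S) hr hg ?_ ?_⟩
  · rintro (_ | q) hq (_ | q') hq' he
    · rfl
    · exact absurd ⟨_, he.symm⟩ hv
    · exact absurd ⟨_, he⟩ hv
    · have := hq q rfl; have := hq' q' rfl
      simp only [Option.elim, Option.some.injEq] at he ⊢
      exact (hole.apply_intCast_eq_iff (by omega) (by omega)).1 he
  · rintro (_ | q) hq (_ | q') hq'
    · simp [apexAdj]
    · rfl
    · exact G.adj_comm _ _
    · have := hq q rfl; have := hq' q' rfl
      exact hole.adj_intCast_iff (by omega) (by omega)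

theorem IsHoleEmb.containsButterfly_of_twoBlocks (hole : IsHoleEmb G n f) {v : W}
    (hv : v ∉ Set.range f) {k : ℕ} {a₁ a₂ b₁ b₂ : ℤ}
    (h : TwoBlocks {q | G.Adj v (f q)} n k a₁ a₂ b₁ b₂) (ha : a₂ = a₁ + 1) (hb : b₂ = b₁ + 1) :
    ContainsButterfly G := by
  have := h.gap_ab; have := h.gap_ba
  have : NeZero n := ⟨by have := hole.1; omega⟩
  have hcast : ∀ q : ℤ, ((q : ZMod n) + 1) = ((q + 1 : ℤ) : ZMod n) := by simp
  have hne : ∀ q r : ℤ, q ≠ r → q - r < n → r - q < n → (q : ZMod n) ≠ r :=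
    fun q r hqr h₁ h₂ => (ZMod.intCast_eq_intCast_iff_of_lt h₁ h₂).not.2 hqr
  refine ⟨n, f, v, hole, hv, a₁, b₁, ?_, ?_, ?_, ?_, ?_, ?_, fun m => ?_⟩
  · exact hne _ _ (by omega) (by omega) (by omega)
  · rw [hcast]; exact hne _ _ (by omega) (by omega) (by omega)
  · rw [hcast]; exact hne _ _ (by omega) (by omega) (by omega)
  · rw [hcast, hcast]; exact hne _ _ (by omega) (by omega) (by omega)
  · rw [hcast, hole.adj_intCast_iff (by omega) (by omega)]; omega
  · rw [hcast, hole.adj_intCast_iff (by omega) (by omega)]; omega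
  · obtain ⟨q, hq₁, hq₂, rfl⟩ := ZMod.exists_intCast_eq m (b₂ - n + 1)
    change q ∈ {q : ℤ | G.Adj v (f q)} ↔ _
    rw [hcast, hcast, h.mem_iff (by omega) (by omega) (by omega) (by omega),
      ZMod.intCast_eq_intCast_iff_of_lt (r := a₁) (by omega) (by omega),
      ZMod.intCast_eq_intCast_iff_of_lt (r := a₁ + 1) (by omega) (by omega),
      ZMod.intCast_eq_intCast_iff_of_lt (r := b₁) (by omega) (by omega),
      ZMod.intCast_eq_intCast_iff_of_lt (r := b₁ + 1) (by omega) (by omega), ha, hb]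

theorem IsHoleEmb.containsSpider_of_twoBlocks (hole : IsHoleEmb G n f) {v : W}
    (hv : v ∉ Set.range f) (hbf : ¬ContainsButterfly G) {k : ℕ} {a₁ a₂ b₁ b₂ : ℤ}
    (h : TwoBlocks {q | G.Adj v (f q)} n k a₁ a₂ b₁ b₂) (hne : a₁ < a₂ ∨ b₁ < b₂) :
    ContainsSpider G (k + 1) := by
  have := h.le_a; have := h.le_b; have := h.gap_ab; have := h.gap_ba
  by_cases ha : a₁ + 2 ≤ a₂
  · refine hole.containsSpider_of_apexAdj hv (a₁ - k) (h.isSpiderFor_of_two_le_a ha) (by simp) ?_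
    intro j m q hq
    fin_cases j <;> simp at hq <;> omega
  by_cases hb : b₁ + 2 ≤ b₂
  · refine hole.containsSpider_of_apexAdj hv (a₁ - k) (h.isSpiderFor_of_two_le_b hb) (by simp) ?_
    intro j m q hq
    fin_cases j <;> simp at hq <;> omega
  obtain ⟨ha, hb⟩ | ⟨ha, hb⟩ | ⟨ha, hb⟩ :
      (a₂ = a₁ + 1 ∧ b₂ = b₁ + 1) ∨ (a₂ = a₁ + 1 ∧ b₂ = b₁) ∨ (a₂ = a₁ ∧ b₂ = b₁ + 1) := by
    omega
  · exact absurd (hole.containsButterfly_of_twoBlocks hv h ha hb) hbf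
  · refine hole.containsSpider_of_apexAdj hv a₂ (h.isSpiderFor_of_edge_vertex ha hb)
      (by simp; omega) ?_
    intro j m q hq
    by_cases hm : (m : ℕ) = 0 <;> fin_cases j <;> simp [hm] at hq <;> omega
  · refine hole.containsSpider_of_apexAdj hv (a₁ - 1 - k) (h.isSpiderFor_of_vertex_edge ha hb)
      (by simp; omega) ?_
    intro j m q hq
    by_cases hm : (m : ℕ) = 0 <;> fin_cases j <;> simp [hm] at hq <;> omega

open Classical in
noncomputable def holeNbrs (G : SimpleGraph W) (f : ZMod n → W) (u : W) (a b : ℤ) :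
    Finset ℤ :=
  (Ioo a b).filter fun t => G.Adj u (f t)

theorem mem_holeNbrs {u : W} {a b t : ℤ} :
    t ∈ holeNbrs G f u a b ↔ (a < t ∧ t < b) ∧ G.Adj u (f t) := by
  simp [holeNbrs]

namespace IsSpanWheel

variable {K p : ℕ} {c : Fin K → W}

theorem mem_holeNbrs_of_adj (hsw : IsSpanWheel G K n p f c) (i : Fin K) {t : ℤ} (h₀ : 0 ≤ t)
    (hn : t < n) (hadj : G.Adj (c i) (f t)) :
    t ∈ holeNbrs G f (c i) 0 p ∨ t ∈ holeNbrs G f (c i) p n := by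
  simp only [mem_holeNbrs, hadj, and_true]
  obtain ⟨-, -, -, -, -, -, -, hx, hy, -⟩ := hsw
  have h0 : t ≠ 0 := by rintro rfl; exact hx i (by simpa using hadj)
  have hp : t ≠ p := by rintro rfl; exact hy i (by simpa using hadj)
  omega

theorem holeNbrs_left_nonempty (hsw : IsSpanWheel G K n p f c) (i : Fin K) :
    (holeNbrs G f (c i) 0 p).Nonempty := by
  obtain ⟨-, -, -, -, -, -, -, -, -, -, hA, -⟩ := hsw
  obtain ⟨a, ha₀, hap, hadj⟩ := hA i
  exact ⟨a, mem_holeNbrs.2 ⟨⟨by omega, by omega⟩, by simpa using hadj⟩⟩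

theorem holeNbrs_right_nonempty (hsw : IsSpanWheel G K n p f c) (i : Fin K) :
    (holeNbrs G f (c i) p n).Nonempty := by
  obtain ⟨-, -, -, -, -, -, -, -, -, -, -, hB, -⟩ := hsw
  obtain ⟨b, hpb, hbn, hadj⟩ := hB i
  exact ⟨b, mem_holeNbrs.2 ⟨⟨by omega, by omega⟩, by simpa using hadj⟩⟩

theorem le_of_mem_holeNbrs_left (hsw : IsSpanWheel G K n p f c) {i j : Fin K} (hij : i < j)
    {t t' : ℤ} (ht : t ∈ holeNbrs G f (c i) 0 p) (ht' : t' ∈ holeNbrs G f (c j) 0 p) :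
    t ≤ t' := by
  obtain ⟨-, -, -, -, -, -, -, -, -, -, -, -, hord, -⟩ := hsw
  obtain ⟨⟨ht₀, htp⟩, hadj⟩ := mem_holeNbrs.1 ht
  obtain ⟨⟨ht₀', htp'⟩, hadj'⟩ := mem_holeNbrs.1 ht'
  lift t to ℕ using ht₀.le
  lift t' to ℕ using ht₀'.le
  have := hord i j hij t t' (by omega) (by omega) (by simpa using hadj) (by simpa using hadj')
  omega

theorem le_of_mem_holeNbrs_right (hsw : IsSpanWheel G K n p f c) {i j : Fin K} (hij : i < j)
    {t t' : ℤ} (ht : t ∈ holeNbrs G f (c i) p n) (ht' : t' ∈ holeNbrs G f (c j) p n) :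
    t' ≤ t := by
  obtain ⟨-, -, -, -, -, -, -, -, -, -, -, -, -, hord⟩ := hsw
  obtain ⟨⟨htp, htn⟩, hadj⟩ := mem_holeNbrs.1 ht
  obtain ⟨⟨htp', htn'⟩, hadj'⟩ := mem_holeNbrs.1 ht'
  lift t to ℕ using by omega
  lift t' to ℕ using by omega
  have := hord i j hij t t' (by omega) (by omega) (by omega) (by omega) (by simpa using hadj)
    (by simpa using hadj')
  omega

theorem three_le_card_holeNbrs (hsw : IsSpanWheel G K n p f c) (i : Fin K) :
    3 ≤ #(holeNbrs G f (c i) 0 p) + #(holeNbrs G f (c i) p n) := by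
  have : NeZero n := ⟨by have := hsw.1.1; omega⟩
  set S := holeNbrs G f (c i) 0 p ∪ holeNbrs G f (c i) p n
  have hsub : {m : ZMod n | G.Adj (c i) (f m)} ⊆ (S.image Int.cast : Finset (ZMod n)) := by
    intro m hm
    obtain ⟨t, ht₀, htn, rfl⟩ := ZMod.exists_intCast_eq m 0
    exact mem_coe.2 (mem_image_of_mem _ (mem_union.2 (hsw.mem_holeNbrs_of_adj i ht₀ (by omega) hm)))
  obtain ⟨-, -, -, -, -, -, -, -, -, h3, -⟩ := hsw
  calc 3 ≤ {m : ZMod n | G.Adj (c i) (f m)}.ncard := h3 i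
    _ ≤ #(S.image Int.cast : Finset (ZMod n)) := by
      rw [← Set.ncard_coe_finset]; exact Set.ncard_le_ncard hsub
    _ ≤ _ := card_image_le.trans (card_union_le _ _)

theorem val_add_add_two_le (hsw : IsSpanWheel G K n p f c) {d : Fin K} {a b : ℤ}
    (ha : a ∈ holeNbrs G f (c d) 0 p) (hb : b ∈ holeNbrs G f (c d) p n) :
    (d : ℤ) + b + 2 ≤ a + n := by
  have h := card_le_of_ordered_sides (Iio d) d (fun i => holeNbrs G f (c i) 0 p)
    (fun i => holeNbrs G f (c i) p n) 1 (n - 1) a b (fun i => mem_Iio.1)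
    (fun i _ j _ => disjoint_left.2 fun t ht ht' => by rw [mem_holeNbrs] at ht ht'; omega)
    (fun i _ t ht => by rw [mem_holeNbrs] at ht; omega)
    (fun i _ t ht => by rw [mem_holeNbrs] at ht; omega)
    (fun i _ => hsw.three_le_card_holeNbrs i)
    (fun i j hij _ ht _ ht' => hsw.le_of_mem_holeNbrs_left hij ht ht')
    (fun i j hij _ ht _ ht' => hsw.le_of_mem_holeNbrs_right hij ht ht') ha hb
  rw [mem_holeNbrs] at ha hb
  rw [Fin.card_Iio, Int.card_Ico, Int.card_Ioc] at h
  omega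

theorem val_rev_add_add_two_le (hsw : IsSpanWheel G K n p f c) {d : Fin K} {a b : ℤ}
    (ha : a ∈ holeNbrs G f (c d) 0 p) (hb : b ∈ holeNbrs G f (c d) p n) :
    (d.rev : ℤ) + a + 2 ≤ b := by
  -- the centres after `d`, in reverse order and with the two paths swapped
  have h := card_le_of_ordered_sides (Iio d.rev) d.rev (fun i => holeNbrs G f (c i.rev) p n)
    (fun i => holeNbrs G f (c i.rev) 0 p) (p + 1) (p - 1) b a (fun i => mem_Iio.1)
    (fun i _ j _ => disjoint_left.2 fun t ht ht' => by rw [mem_holeNbrs] at ht ht'; omega)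
    (fun i _ t ht => by rw [mem_holeNbrs] at ht; omega)
    (fun i _ t ht => by rw [mem_holeNbrs] at ht; omega)
    (fun i _ => add_comm (#(holeNbrs G f (c i.rev) 0 p)) _ ▸ hsw.three_le_card_holeNbrs i.rev)
    (fun i j hij _ ht _ ht' => hsw.le_of_mem_holeNbrs_right (Fin.rev_lt_rev.2 hij) ht' ht)
    (fun i j hij _ ht _ ht' => hsw.le_of_mem_holeNbrs_left (Fin.rev_lt_rev.2 hij) ht' ht)
    (by rwa [Fin.rev_rev]) (by rwa [Fin.rev_rev])
  rw [mem_holeNbrs] at ha hb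
  rw [Fin.card_Iio, Int.card_Ico, Int.card_Ioc] at h
  omega

theorem exists_twoBlocks (hsw : IsSpanWheel G K n p f c) (d : Fin K) {k : ℕ} (hd : 2 * k ≤ d)
    (hd' : 2 * k ≤ d.rev) :
    ∃ a₁ a₂ b₁ b₂, TwoBlocks {q | G.Adj (c d) (f q)} n k a₁ a₂ b₁ b₂ ∧ (a₁ < a₂ ∨ b₁ < b₂) := by
  have h3 := hsw.three_le_card_holeNbrs d
  set A := holeNbrs G f (c d) 0 p
  set B := holeNbrs G f (c d) p n
  have hA := hsw.holeNbrs_left_nonempty d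
  have hB := hsw.holeNbrs_right_nonempty d
  have ha₁ := mem_holeNbrs.1 (A.min'_mem hA)
  have ha₂ := mem_holeNbrs.1 (A.max'_mem hA)
  have hb₁ := mem_holeNbrs.1 (B.min'_mem hB)
  have hb₂ := mem_holeNbrs.1 (B.max'_mem hB)
  have hblocks : ∀ t : ℤ, 0 ≤ t → t < n → G.Adj (c d) (f t) →
      (A.min' hA ≤ t ∧ t ≤ A.max' hA) ∨ (B.min' hB ≤ t ∧ t ≤ B.max' hB) := fun t h₀ hn ht =>
    (hsw.mem_holeNbrs_of_adj d h₀ hn ht).imp (fun h => ⟨min'_le _ _ h, le_max' _ _ h⟩)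
      (fun h => ⟨min'_le _ _ h, le_max' _ _ h⟩)
  have hper : ∀ t : ℤ, f ((t + n : ℤ) : ZMod n) = f t := by simp
  refine ⟨A.min' hA, A.max' hA, B.min' hB, B.max' hB, ⟨min'_le_max' _ _, min'_le_max' _ _,
    ?_, ?_, ha₁.2, ha₂.2, hb₁.2, hb₂.2, fun q h₁ h₂ hq => ?_⟩, ?_⟩
  · have := hsw.val_rev_add_add_two_le (A.max'_mem hA) (B.min'_mem hB); omega
  · have := hsw.val_add_add_two_le (A.min'_mem hA) (B.max'_mem hB); omega
  · rcases lt_or_ge q 0 with hq₀ | hq₀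
    · have := hblocks (q + n) (by omega) (by omega) (by rw [hper]; exact hq); omega
    rcases lt_or_ge q n with hqn | hqn
    · exact hblocks q hq₀ hqn hq
    · have := hblocks (q - n) (by omega) (by omega) (by rw [← hper, sub_add_cancel]; exact hq)
      omega
  · by_cases h : 1 < #A
    · exact .inl (min'_lt_max'_of_card _ h)
    · exact .inr (min'_lt_max'_of_card _ (by omega))

end IsSpanWheel

end

/-- If a butterfly-free graph contains a `(4k+1)`-span-wheel (`k ≥ 0`),
then it contains `S_{k+1,k+1,k+1}` as an induced subgraph. -/
theorem statement12 (G : SimpleGraph V) (k : ℕ) (hbf : ¬ContainsButterfly G)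
    (hsw : ∃ (n p : ℕ) (f : ZMod n → V) (c : Fin (4 * k + 1) → V),
      IsSpanWheel G (4 * k + 1) n p f c) :
    ContainsSpider G (k + 1) := by
  obtain ⟨n, p, f, c, hsw⟩ := hsw
  let mid : Fin (4 * k + 1) := ⟨2 * k, by omega⟩
  have hmid : 2 * k ≤ mid.rev := by simp [mid, Fin.val_rev]; omega
  obtain ⟨a₁, a₂, b₁, b₂, hblocks, hne⟩ := hsw.exists_twoBlocks mid le_rfl hmid
  obtain ⟨hole, -, -, -, -, hc, -⟩ := hsw
  exact hole.containsSpider_of_twoBlocks (hc mid) hbf hblocks hne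
end

section
/- Let G be a graph containing a (4k+1)-span-wheel (k ≥ 0) with vertices x, y, paths P_A, P_B, and ordered centers v_1, …, v_{4k+1} as in the definition of span-wheel. For each i, let a_i (resp. a'_i) be the neighbor of v_i on P_A closest to x (resp. to y) along P_A, let b_i (resp. b'_i) be the neighbor of v_i on P_B closest to x (resp. to y) along P_B, and set P_i = a_i P_A x P_B b_i and Q_i = a'_i P_A y P_B b'_i. Then for every i with 1 ≤ i ≤ 4k+1, the path P_i has length at least i+1 and the path Q_i has length at least 4k+3−i. -/
open SimpleGraph

variable {V : Type} [Fintype V] [DecidableEq V]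

/-- In a `(4k+1)`-span-wheel with centers `c 0, …, c 4k` (the center `c i`
being the paper's `v_{i+1}`), let `a_i` (resp. `a'_i`) be the neighbor of `c i` on `P_A`
closest to `x` (resp. to `y`) and `b_i` (resp. `b'_i`) the neighbor of `c i` on `P_B`
closest to `x` (resp. to `y`), neighbors on `P_A` being recorded by their position `≤ p`
along the hole and neighbors on `P_B` by their position in `[p, n]`. Then the path
`P_i = a_i P_A x P_B b_i` has length `a_i + (n - b_i) ≥ (i+1) + 1` and the path
`Q_i = a'_i P_A y P_B b'_i` has length `(p - a'_i) + (b'_i - p) ≥ 4k + 3 - (i+1)`. -/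
theorem statement13 (G : SimpleGraph V) (k n p : ℕ) (f : ZMod n → V)
    (c : Fin (4 * k + 1) → V) (hsw : IsSpanWheel G (4 * k + 1) n p f c) :
    ∀ (i : Fin (4 * k + 1)) (ai bi ai' bi' : ℕ),
      (ai ≤ p ∧ G.Adj (c i) (f (ai : ZMod n)) ∧
        ∀ a : ℕ, a ≤ p → G.Adj (c i) (f (a : ZMod n)) → ai ≤ a) →
      (p ≤ bi ∧ bi ≤ n ∧ G.Adj (c i) (f (bi : ZMod n)) ∧
        ∀ b : ℕ, p ≤ b → b ≤ n → G.Adj (c i) (f (b : ZMod n)) → b ≤ bi) →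
      (ai' ≤ p ∧ G.Adj (c i) (f (ai' : ZMod n)) ∧
        ∀ a : ℕ, a ≤ p → G.Adj (c i) (f (a : ZMod n)) → a ≤ ai') →
      (p ≤ bi' ∧ bi' ≤ n ∧ G.Adj (c i) (f (bi' : ZMod n)) ∧
        ∀ b : ℕ, p ≤ b → b ≤ n → G.Adj (c i) (f (b : ZMod n)) → bi' ≤ b) →
      (i : ℕ) + 2 ≤ ai + (n - bi) ∧ 4 * k + 2 - (i : ℕ) ≤ (p - ai') + (bi' - p) := by
  obtain ⟨hhole, hp2, hpn, hxy, hcinj, hcrange, hcc, hcx, hcy, hdeg, hA, hB, hordA, hordB⟩ := hsw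
  obtain ⟨hn4, hfinj, hadj⟩ := hhole
  haveI : NeZero n := ⟨by omega⟩
  set AS : Fin (4 * k + 1) → Set ℕ :=
    fun j => {a | a ≤ p ∧ G.Adj (c j) (f (a : ZMod n))} with hAS
  set BS : Fin (4 * k + 1) → Set ℕ :=
    fun j => {b | p ≤ b ∧ b ≤ n ∧ G.Adj (c j) (f (b : ZMod n))} with hBS
  have hASne : ∀ j, (AS j).Nonempty := by
    intro j; obtain ⟨a, h1, h2, h3⟩ := hA j; exact ⟨a, le_of_lt h2, h3⟩
  have hBSne : ∀ j, (BS j).Nonempty := by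
    intro j; obtain ⟨b, h1, h2, h3⟩ := hB j; exact ⟨b, le_of_lt h1, le_of_lt h2, h3⟩
  have hASbdd : ∀ j, BddAbove (AS j) := fun j => ⟨p, fun a ha => ha.1⟩
  have hBSbdd : ∀ j, BddAbove (BS j) := fun j => ⟨n, fun b hb => hb.2.1⟩
  set mA : Fin (4 * k + 1) → ℕ := fun j => sInf (AS j) with hmAdef
  set MA : Fin (4 * k + 1) → ℕ := fun j => sSup (AS j) with hMAdef
  set mB : Fin (4 * k + 1) → ℕ := fun j => sInf (BS j) with hmBdef
  set MB : Fin (4 * k + 1) → ℕ := fun j => sSup (BS j) with hMBdef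
  have hmA : ∀ j, mA j ∈ AS j := fun j => Nat.sInf_mem (hASne j)
  have hMA : ∀ j, MA j ∈ AS j := fun j => Nat.sSup_mem (hASne j) (hASbdd j)
  have hmB : ∀ j, mB j ∈ BS j := fun j => Nat.sInf_mem (hBSne j)
  have hMB : ∀ j, MB j ∈ BS j := fun j => Nat.sSup_mem (hBSne j) (hBSbdd j)
  have hmMA : ∀ j, mA j ≤ MA j := fun j => Nat.sInf_le (hMA j)
  have hmMB : ∀ j, mB j ≤ MB j := fun j => Nat.sInf_le (hMB j)
  have h1mA : ∀ j, 1 ≤ mA j := by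
    intro j
    by_contra h
    have h0 : mA j = 0 := by omega
    have hadj0 := (hmA j).2
    rw [h0] at hadj0
    simp only [Nat.cast_zero] at hadj0
    exact hcx j hadj0
  have hMAp : ∀ j, MA j < p := by
    intro j
    rcases lt_or_eq_of_le (hMA j).1 with h | h
    · exact h
    · exfalso; have h2 := (hMA j).2; rw [h] at h2; exact hcy j h2
  have hpmB : ∀ j, p < mB j := by
    intro j
    rcases lt_or_eq_of_le (hmB j).1 with h | h
    · exact h
    · exfalso; have h2 := (hmB j).2.2; rw [← h] at h2; exact hcy j h2
  have hMBn : ∀ j, MB j < n := by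
    intro j
    rcases lt_or_eq_of_le (hMB j).2.1 with h | h
    · exact h
    · exfalso; have h2 := (hMB j).2.2; rw [h, ZMod.natCast_self] at h2; exact hcx j h2
  have hordA' : ∀ j j' : Fin (4 * k + 1), j < j' → MA j ≤ mA j' :=
    fun j j' h => hordA j j' h (MA j) (mA j') (hMA j).1 (hmA j').1 (hMA j).2 (hmA j').2
  have hordB' : ∀ j j' : Fin (4 * k + 1), j < j' → MB j' ≤ mB j :=
    fun j j' h => hordB j j' h (mB j) (MB j') (hmB j).1 (hmB j).2.1 (hMB j').1 (hMB j').2.1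
      (hmB j).2.2 (hMB j').2.2
  have hstrict : ∀ j, mA j < MA j ∨ mB j < MB j := by
    intro j
    by_contra h
    push_neg at h
    have heA : mA j = MA j := le_antisymm (hmMA j) h.1
    have heB : mB j = MB j := le_antisymm (hmMB j) h.2
    have hsub : {m : ZMod n | G.Adj (c j) (f m)} ⊆
        {((mA j : ℕ) : ZMod n), ((mB j : ℕ) : ZMod n)} := by
      intro m hm
      have hv : ((m.val : ℕ) : ZMod n) = m := by
        rw [ZMod.natCast_val, ZMod.cast_id]
      rw [Set.mem_insert_iff, Set.mem_singleton_iff]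
      rcases le_or_gt m.val p with hle | hlt
      · have hmem : m.val ∈ AS j := ⟨hle, by rw [hv]; exact hm⟩
        have h1 : mA j ≤ m.val := Nat.sInf_le hmem
        have h2 : m.val ≤ MA j := le_csSup (hASbdd j) hmem
        have h3 : m.val = mA j := by omega
        left; rw [← h3]; exact hv.symm
      · have hmem : m.val ∈ BS j := ⟨le_of_lt hlt, le_of_lt (ZMod.val_lt m), by rw [hv]; exact hm⟩
        have h1 : mB j ≤ m.val := Nat.sInf_le hmem
        have h2 : m.val ≤ MB j := le_csSup (hBSbdd j) hmem
        have h3 : m.val = mB j := by omega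
        right; rw [← h3]; exact hv.symm
    have hcard : {m : ZMod n | G.Adj (c j) (f m)}.ncard ≤ 2 := by
      refine le_trans (Set.ncard_le_ncard hsub (Set.toFinite _)) ?_
      exact le_trans (Set.ncard_insert_le _ _) (by simp)
    have := hdeg j
    omega
  have sInd : ∀ m : ℕ, ∀ hm : m < 4 * k + 1,
      m + 2 ≤ mA ⟨m, hm⟩ + (n - MB ⟨m, hm⟩) := by
    intro m
    induction m with
    | zero =>
      intro hm
      have t1 := h1mA ⟨0, hm⟩
      have t2 := hMBn ⟨0, hm⟩
      omega
    | succ m ih =>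
      intro hm
      have hm' : m < 4 * k + 1 := by omega
      have hlt : (⟨m, hm'⟩ : Fin (4 * k + 1)) < ⟨m + 1, hm⟩ := by
        simp [Fin.mk_lt_mk]
      have e1 := hordA' _ _ hlt
      have e2 := hordB' _ _ hlt
      have e3 := hstrict ⟨m, hm'⟩
      have e4 := ih hm'
      have e5 := hmMA ⟨m, hm'⟩
      have e6 := hmMB ⟨m, hm'⟩
      have e7 := hMBn ⟨m, hm'⟩
      have e8 := hMBn ⟨m + 1, hm⟩
      have e9 := hpmB ⟨m, hm'⟩
      omega
  have tInd : ∀ d : ℕ, ∀ m : ℕ, ∀ hm : m < 4 * k + 1, m + d = 4 * k →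
      d + 2 ≤ (p - MA ⟨m, hm⟩) + (mB ⟨m, hm⟩ - p) := by
    intro d
    induction d with
    | zero =>
      intro m hm he
      have t1 := hMAp ⟨m, hm⟩
      have t2 := hpmB ⟨m, hm⟩
      omega
    | succ d ih =>
      intro m hm he
      have hm1 : m + 1 < 4 * k + 1 := by omega
      have e0 := ih (m + 1) hm1 (by omega)
      have hlt : (⟨m, hm⟩ : Fin (4 * k + 1)) < ⟨m + 1, hm1⟩ := by
        simp [Fin.mk_lt_mk]
      have e1 := hordA' _ _ hlt
      have e2 := hordB' _ _ hlt
      have e3 := hstrict ⟨m + 1, hm1⟩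
      have e4 := hmMA ⟨m + 1, hm1⟩
      have e5 := hmMB ⟨m + 1, hm1⟩
      have e6 := hMAp ⟨m, hm⟩
      have e7 := hMAp ⟨m + 1, hm1⟩
      have e8 := hpmB ⟨m, hm⟩
      have e9 := hpmB ⟨m + 1, hm1⟩
      omega
  intro i ai bi ai' bi' hai hbi hai' hbi'
  have heai : ai = mA i :=
    le_antisymm (hai.2.2 _ (hmA i).1 (hmA i).2) (Nat.sInf_le ⟨hai.1, hai.2.1⟩)
  have hebi : bi = MB i :=
    le_antisymm (le_csSup (hBSbdd i) ⟨hbi.1, hbi.2.1, hbi.2.2.1⟩)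
      (hbi.2.2.2 _ (hMB i).1 (hMB i).2.1 (hMB i).2.2)
  have heai' : ai' = MA i :=
    le_antisymm (le_csSup (hASbdd i) ⟨hai'.1, hai'.2.1⟩)
      (hai'.2.2 _ (hMA i).1 (hMA i).2)
  have hebi' : bi' = mB i :=
    le_antisymm (hbi'.2.2.2 _ (hmB i).1 (hmB i).2.1 (hmB i).2.2)
      (Nat.sInf_le ⟨hbi'.1, hbi'.2.1, hbi'.2.2.1⟩)
  have hie : (⟨(i : ℕ), i.isLt⟩ : Fin (4 * k + 1)) = i := Fin.eta i i.isLt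
  constructor
  · have hs := sInd (i : ℕ) i.isLt
    rw [hie] at hs
    rw [heai, hebi]
    exact hs
  · have ht := tInd (4 * k - (i : ℕ)) (i : ℕ) i.isLt (by omega)
    rw [hie] at ht
    rw [heai', hebi']
    have hile : (i : ℕ) ≤ 4 * k := by omega
    omega
end
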